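/- arXiv:1809.02423 — 6 statements merged into one kernel-verified Lean document; each statement's English description precedes it below -/
import Mathlib

section
/- The LCM matrix [S] = (lcm(x_i, x_j)) of any GCD-closed set S of distinct positive integers with at most 7 elements is invertible. -/
/-!
Write `[S] = D C D` with `D = diag(x)` and `C = (1 / gcd(x_i, x_j))`. For a GCD-closed `S`,
`C = E Δ Eᵀ` with `E` the unitriangular divisibility matrix and `Δ = diag(α(x))`, where `α` is the
Möbius inversion of `n ↦ 1/n` along divisibility in `S` (Smith's determinant). So it suffices that
no `α(v)` vanishes. By inclusion–exclusion over the maximal proper divisors `y₁, …, yₘ` of `v` in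
`S`, `α(v) = ∑_{T ⊆ {y₁, …, yₘ}} (-1)^|T| / gcd(T ∪ {v})`. The gcds of two or more of the `yᵢ`
are new elements of `S`, so `|S| ≤ 7` leaves room for at most `6 - m` of them. For `m ≤ 1` the
sum is `1/v` or `1/v - 1/y₁`; for `m = 3` some pairwise gcd equals the gcd of all three, and
otherwise at most two distinct gcds occur. In the last two cases the sum is positive, because a
proper divisor `d` of `y` has `1/d ≥ 2/y`.
-/

open scoped Classical
open Finset

theorem sum_powerset_singleton {α β : Type*} [AddCommMonoid β] (g : Finset α → β) (a : α) :
    ∑ T ∈ ({a} : Finset α).powerset, g T = g ∅ + g {a} := by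
  rw [← insert_empty, sum_powerset_insert (notMem_empty a)]
  simp

theorem sum_powerset_triple {α R : Type*} [DecidableEq α] [CommRing R] (F : Finset α → R)
    {a b c : α} (hab : a ≠ b) (hac : a ≠ c) (hbc : b ≠ c) :
    ∑ T ∈ ({a, b, c} : Finset α).powerset, (-1) ^ T.card * F T =
      F ∅ - F {a} - F {b} - F {c} + F {a, b} + F {a, c} + F {b, c} - F {a, b, c} := by
  rw [sum_powerset_insert (by simp [hab, hac]), sum_powerset_insert (by simp [hbc]),
    sum_powerset_insert (by simp [hbc])]
  simp [sum_powerset_singleton, hab, hac, hbc]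
  ring

theorem sum_powerset_neg_one_pow_ite_subset {α R : Type*} [DecidableEq α] [CommRing R]
    {A M : Finset α} (hAM : A ⊆ M) :
    ∑ T ∈ M.powerset, (if T ⊆ A then (-1 : R) ^ T.card else 0) = if A = ∅ then 1 else 0 := by
  have hfilter : M.powerset.filter (· ⊆ A) = A.powerset := by
    ext T
    simp only [mem_filter, mem_powerset, and_iff_right_iff_imp]
    exact fun h => h.trans hAM
  have h := congrArg (Int.cast : ℤ → R) (sum_powerset_neg_one_pow_card (x := A))
  push_cast [apply_ite (Int.cast : ℤ → R)] at h
  rw [← sum_filter, hfilter, h]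

theorem sum_powerset_neg_one_pow_mul_of_card_le_one {α R : Type*} [DecidableEq α] [CommRing R]
    {M : Finset α} (ψ : Finset α → R) (hψ : ∀ T ⊆ M, 2 ≤ T.card → ψ T = 0) :
    ∑ T ∈ M.powerset, (-1) ^ T.card * ψ T = ψ ∅ - ∑ y ∈ M, ψ {y} := by
  have hsub : insert ∅ (M.image singleton) ⊆ M.powerset := by
    simp [insert_subset_iff, image_subset_iff]
  rw [← sum_subset hsub fun T hT hT' => ?_, sum_insert (by simp),
    sum_image fun _ _ _ _ h => singleton_injective h]
  · simp [sub_eq_add_neg]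
  · have hcard : 2 ≤ T.card := by
      by_contra! h
      interval_cases hc : T.card
      · simp_all
      · obtain ⟨a, rfl⟩ := card_eq_one.mp hc
        simp_all
    rw [hψ T (mem_powerset.mp hT) hcard, mul_zero]

theorem sum_powerset_neg_one_pow_mul_of_eq_ite {α R : Type*} [DecidableEq α] [CommRing R]
    {M K : Finset α} (hKM : K ⊆ M) (hK : K.Nonempty) (F : Finset α → R) (c d : R)
    (hF : ∀ T ⊆ M, 2 ≤ T.card → F T = c + if T ⊆ K then d else 0) :
    ∑ T ∈ M.powerset, (-1) ^ T.card * F T =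
      F ∅ - c - d - ∑ y ∈ M, (F {y} - c - if y ∈ K then d else 0) := by
  have halt : ∑ T ∈ M.powerset, (-1 : R) ^ T.card = 0 := by
    have h := sum_powerset_neg_one_pow_ite_subset (R := R) (subset_refl M)
    rwa [if_neg (hK.mono hKM).ne_empty, sum_congr rfl fun T hT => if_pos (mem_powerset.mp hT)]
      at h
  have haltK : ∑ T ∈ M.powerset, (if T ⊆ K then (-1 : R) ^ T.card else 0) = 0 := by
    rw [sum_powerset_neg_one_pow_ite_subset hKM, if_neg hK.ne_empty]
  have hterm : ∀ T : Finset α, (-1 : R) ^ T.card * F T =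
      (-1) ^ T.card * (F T - c - if T ⊆ K then d else 0) + (-1) ^ T.card * c +
        d * if T ⊆ K then (-1) ^ T.card else 0 := by
    intro T; split_ifs <;> ring
  rw [sum_congr rfl fun T _ => hterm T, sum_add_distrib, sum_add_distrib, ← sum_mul, ← mul_sum,
    halt, haltK, sum_powerset_neg_one_pow_mul_of_card_le_one
      (fun T => F T - c - if T ⊆ K then d else 0) fun T hTM hT => by simp only [hF T hTM hT]; ring]
  simp only [empty_subset, if_true, singleton_subset_iff]
  ring

theorem two_mul_inv_le_inv_of_dvd {d e : ℕ} (he : 0 < e) (hde : d ∣ e) (hne : d ≠ e) :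
    2 * (e : ℚ)⁻¹ ≤ (d : ℚ)⁻¹ := by
  obtain ⟨k, rfl⟩ := hde
  have hk : 2 ≤ k := by
    rcases k with _ | _ | k
    · simp at he
    · simp at hne
    · omega
  calc 2 * ((d * k : ℕ) : ℚ)⁻¹ = (d : ℚ)⁻¹ * (2 / k) := by push_cast; ring
    _ ≤ (d : ℚ)⁻¹ * 1 := by
      gcongr
      rw [div_le_one (by positivity)]
      exact_mod_cast hk
    _ = (d : ℚ)⁻¹ := mul_one _

theorem gcd_insert_of_forall_dvd {T : Finset ℕ} {v : ℕ} (hT : T.Nonempty)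
    (h : ∀ y ∈ T, y ∣ v) : (insert v T).gcd id = T.gcd id := by
  obtain ⟨y, hy⟩ := hT
  rw [gcd_insert, id, gcd_eq_nat_gcd]
  exact Nat.gcd_eq_right ((gcd_dvd hy).trans (h y hy))

theorem gcd_mem_of_subset {S T : Finset ℕ} (hS : ∀ a ∈ S, ∀ b ∈ S, Nat.gcd a b ∈ S)
    (hT : T.Nonempty) (hTS : T ⊆ S) : T.gcd id ∈ S := by
  induction hT using Nonempty.cons_induction with
  | singleton a => simpa using hTS (mem_singleton_self a)
  | cons a T ha hT ih =>
    rw [cons_eq_insert, gcd_insert, id, gcd_eq_nat_gcd]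
    rw [cons_eq_insert, insert_subset_iff] at hTS
    exact hS _ hTS.1 _ (ih hTS.2)

noncomputable def divisorMoebius {R : Type*} [CommRing R] (S : Finset ℕ) (f : ℕ → R) (v : ℕ) :
    R :=
  f v - ∑ u ∈ (S.filter (fun u => u ∣ v ∧ u < v)).attach, divisorMoebius S f u
termination_by v
decreasing_by exact (mem_filter.mp u.2).2.2

def divisorZeta (R : Type*) [Zero R] [One R] (S : Finset ℕ) : Matrix S S R :=
  Matrix.of fun a b => if (b : ℕ) ∣ a then 1 else 0

def coatoms (S : Finset ℕ) (v : ℕ) : Finset ℕ :=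
  S.filter fun y => y ∣ v ∧ y ≠ v ∧ ∀ z ∈ S, y ∣ z → z ∣ v → z = y ∨ z = v

section DivisorPoset

variable {R : Type*} [CommRing R] {S : Finset ℕ}

theorem sum_divisorMoebius (f : ℕ → R) {v : ℕ} (hv : v ∈ S) (hv0 : 0 < v) :
    ∑ u ∈ S with u ∣ v, divisorMoebius S f u = f v := by
  have hsplit : S.filter (· ∣ v) = insert v (S.filter fun u => u ∣ v ∧ u < v) := by
    ext u
    simp only [mem_filter, mem_insert]
    constructor
    · rintro ⟨hu, hd⟩
      rcases (Nat.le_of_dvd hv0 hd).eq_or_lt with rfl | hlt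
      · exact Or.inl rfl
      · exact Or.inr ⟨hu, hd, hlt⟩
    · rintro (rfl | ⟨hu, hd, -⟩)
      exacts [⟨hv, dvd_rfl⟩, ⟨hu, hd⟩]
  rw [hsplit, sum_insert (by simp), divisorMoebius, sum_attach]
  ring

theorem gcd_matrix_eq_mul (hS0 : 0 ∉ S) (hS : ∀ a ∈ S, ∀ b ∈ S, Nat.gcd a b ∈ S) (f : ℕ → R) :
    (Matrix.of fun a b : S => f (Nat.gcd a b)) =
      divisorZeta R S * Matrix.diagonal (fun a : S => divisorMoebius S f a) *
        (divisorZeta R S).transpose := by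
  ext a b
  have hg : Nat.gcd a b ∈ S := hS _ a.2 _ b.2
  have hg0 : 0 < Nat.gcd a b := Nat.pos_of_ne_zero fun h => hS0 (h ▸ hg)
  rw [Matrix.of_apply, ← sum_divisorMoebius f hg hg0, sum_filter, ← sum_coe_sort S,
    Matrix.mul_apply]
  simp only [Matrix.mul_diagonal, divisorZeta, Matrix.of_apply, Matrix.transpose_apply,
    Nat.dvd_gcd_iff]
  refine sum_congr rfl fun c _ => ?_
  split_ifs <;> simp_all

theorem det_gcd_matrix (hS0 : 0 ∉ S) (hS : ∀ a ∈ S, ∀ b ∈ S, Nat.gcd a b ∈ S) (f : ℕ → R) :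
    (Matrix.of fun a b : S => f (Nat.gcd a b)).det = ∏ a : S, divisorMoebius S f a := by
  have hE : (divisorZeta R S).det = 1 := by
    rw [Matrix.det_of_isLowerTriangular]
    · simp [divisorZeta]
    · intro a b hab
      have hpos : 0 < (a : ℕ) := Nat.pos_of_ne_zero fun h => hS0 (h ▸ a.2)
      have : ¬ (b : ℕ) ∣ a := fun h => absurd (Nat.le_of_dvd hpos h) (not_le.mpr hab)
      simp [divisorZeta, this]
  rw [gcd_matrix_eq_mul hS0 hS, Matrix.det_mul, Matrix.det_mul, Matrix.det_transpose, hE,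
    Matrix.det_diagonal, one_mul, mul_one]

theorem det_lcm_matrix (hS0 : 0 ∉ S) (hS : ∀ a ∈ S, ∀ b ∈ S, Nat.gcd a b ∈ S) :
    (Matrix.of fun a b : S => (Nat.lcm a b : ℚ)).det =
      (∏ a : S, (a : ℚ)) ^ 2 * ∏ a : S, divisorMoebius S (fun n => (n : ℚ)⁻¹) a := by
  have hfac : (Matrix.of fun a b : S => (Nat.lcm a b : ℚ)) =
      Matrix.diagonal (fun a : S => (a : ℚ)) *
        Matrix.of (fun a b : S => ((Nat.gcd a b : ℕ) : ℚ)⁻¹) *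
        Matrix.diagonal (fun a : S => (a : ℚ)) := by
    ext a b
    have hg0 : (Nat.gcd a b : ℚ) ≠ 0 := by
      have : 0 < (a : ℕ) := Nat.pos_of_ne_zero fun h => hS0 (h ▸ a.2)
      exact_mod_cast (Nat.gcd_pos_of_pos_left _ this).ne'
    have h := congrArg (Nat.cast : ℕ → ℚ) (Nat.gcd_mul_lcm a b)
    push_cast at h
    simp only [Matrix.of_apply, Matrix.mul_diagonal, Matrix.diagonal_mul]
    field_simp
    linear_combination h
  have hC := det_gcd_matrix hS0 hS fun n : ℕ => (n : ℚ)⁻¹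
  rw [hfac, Matrix.det_mul, Matrix.det_mul, hC, Matrix.det_diagonal]
  ring

theorem coatoms_subset (v : ℕ) : coatoms S v ⊆ S := filter_subset _ _

theorem dvd_of_mem_coatoms {v y : ℕ} (hy : y ∈ coatoms S v) : y ∣ v := (mem_filter.mp hy).2.1

theorem ne_of_mem_coatoms {v y : ℕ} (hy : y ∈ coatoms S v) : y ≠ v := (mem_filter.mp hy).2.2.1

theorem isAntichain_coatoms (v : ℕ) : IsAntichain (· ∣ ·) (coatoms S v : Set ℕ) := by
  intro y hy z hz hne hyz
  obtain ⟨-, -, hmax⟩ := (mem_filter.mp hy).2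
  obtain ⟨hzS, hzv, hzne, -⟩ := mem_filter.mp hz
  rcases hmax z hzS hyz hzv with h | h
  exacts [hne h.symm, hzne h]

theorem exists_coatom_dvd {u v : ℕ} (hv0 : 0 < v) (hu : u ∈ S) (huv : u ∣ v) (hne : u ≠ v) :
    ∃ y ∈ coatoms S v, u ∣ y := by
  obtain ⟨y, hy, hmax⟩ := exists_max_image (S.filter fun z => u ∣ z ∧ z ∣ v ∧ z ≠ v) id
    ⟨u, mem_filter.mpr ⟨hu, dvd_rfl, huv, hne⟩⟩
  obtain ⟨hyS, huy, hyv, hyne⟩ := mem_filter.mp hy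
  refine ⟨y, mem_filter.mpr ⟨hyS, hyv, hyne, fun z hz hyz hzv => ?_⟩, huy⟩
  by_cases hzne : z = v
  · exact Or.inr hzne
  · have hzy : z ≤ y := hmax z (mem_filter.mpr ⟨hz, huy.trans hyz, hzv, hzne⟩)
    exact Or.inl (le_antisymm hzy (Nat.le_of_dvd (Nat.pos_of_dvd_of_pos hzv hv0) hyz))

theorem gcd_mem_sdiff_of_two_le_card (hS : ∀ a ∈ S, ∀ b ∈ S, Nat.gcd a b ∈ S) {v : ℕ}
    {T : Finset ℕ} (hT : T ⊆ coatoms S v) (h2 : 2 ≤ T.card) :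
    T.gcd id ∈ S \ insert v (coatoms S v) := by
  obtain ⟨y, hy⟩ : T.Nonempty := card_pos.mp (by omega)
  refine mem_sdiff.mpr ⟨gcd_mem_of_subset hS ⟨y, hy⟩ (hT.trans (coatoms_subset v)), fun h => ?_⟩
  rcases mem_insert.mp h with h | h
  · exact ne_of_mem_coatoms (hT hy)
      (Nat.dvd_antisymm (dvd_of_mem_coatoms (hT hy)) (h ▸ gcd_dvd hy))
  · obtain ⟨z, hz, hne⟩ := exists_mem_ne h2 (T.gcd id)
    exact isAntichain_coatoms v h (hT hz) hne.symm (gcd_dvd hz)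

theorem sum_powerset_coatoms_ite_dvd {u v : ℕ} (hv0 : 0 < v) (hu : u ∈ S) :
    ∑ T ∈ (coatoms S v).powerset, (-1 : R) ^ T.card *
      (if u ∣ (insert v T).gcd id then 1 else 0) = if u = v then 1 else 0 := by
  set M := coatoms S v
  by_cases huv : u ∣ v
  · -- only the `T` made of coatoms above `u` contribute, and such coatoms exist unless `u = v`
    have hdvd : ∀ T ∈ M.powerset, (u ∣ (insert v T).gcd id ↔ T ⊆ M.filter (u ∣ ·)) := by
      intro T hT
      simp only [Finset.dvd_gcd_iff, forall_mem_insert, id, huv, true_and, subset_iff,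
        mem_filter]
      exact ⟨fun h y hy => ⟨mem_powerset.mp hT hy, h y hy⟩, fun h y hy => (h hy).2⟩
    rw [sum_congr rfl fun T hT => by
        rw [mul_ite, mul_one, mul_zero, if_congr (hdvd T hT) rfl rfl],
      sum_powerset_neg_one_pow_ite_subset (filter_subset _ _)]
    congr 1
    refine propext ⟨fun h => ?_, fun h => ?_⟩
    · by_contra hne
      obtain ⟨y, hy, huy⟩ := exists_coatom_dvd hv0 hu huv hne
      exact (eq_empty_iff_forall_notMem.mp h) y (mem_filter.mpr ⟨hy, huy⟩)
    · subst h
      refine eq_empty_iff_forall_notMem.mpr fun y hy => ?_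
      obtain ⟨hyM, hvy⟩ := mem_filter.mp hy
      exact ne_of_mem_coatoms hyM (Nat.dvd_antisymm (dvd_of_mem_coatoms hyM) hvy)
  · have hndvd : ∀ T : Finset ℕ, ¬ u ∣ (insert v T).gcd id := fun T h =>
      huv (h.trans (gcd_dvd (mem_insert_self v T)))
    simp only [hndvd, if_false, mul_zero, sum_const_zero]
    rw [if_neg fun h : u = v => huv (h ▸ dvd_rfl)]

theorem divisorMoebius_eq_sum_powerset_coatoms (hS0 : 0 ∉ S)
    (hS : ∀ a ∈ S, ∀ b ∈ S, Nat.gcd a b ∈ S) (f : ℕ → R) {v : ℕ} (hv : v ∈ S) :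
    divisorMoebius S f v =
      ∑ T ∈ (coatoms S v).powerset, (-1) ^ T.card * f ((insert v T).gcd id) := by
  have hv0 : 0 < v := Nat.pos_of_ne_zero fun h => hS0 (h ▸ hv)
  have hexpand : ∀ T ∈ (coatoms S v).powerset, f ((insert v T).gcd id) =
      ∑ u ∈ S, if u ∣ (insert v T).gcd id then divisorMoebius S f u else 0 := by
    intro T hT
    have hmem : (insert v T).gcd id ∈ S := gcd_mem_of_subset hS (insert_nonempty v T)
      (insert_subset hv ((mem_powerset.mp hT).trans (coatoms_subset v)))
    have hpos : 0 < (insert v T).gcd id := Nat.pos_of_ne_zero fun h =>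
      hv0.ne' ((gcd_eq_zero_iff.mp h) v (mem_insert_self v T))
    rw [← sum_filter, sum_divisorMoebius f hmem hpos]
  symm
  calc ∑ T ∈ (coatoms S v).powerset, (-1) ^ T.card * f ((insert v T).gcd id)
      = ∑ T ∈ (coatoms S v).powerset, (-1) ^ T.card *
          ∑ u ∈ S, if u ∣ (insert v T).gcd id then divisorMoebius S f u else 0 :=
        sum_congr rfl fun T hT => by rw [hexpand T hT]
    _ = ∑ u ∈ S, divisorMoebius S f u * ∑ T ∈ (coatoms S v).powerset, (-1 : R) ^ T.card *
          (if u ∣ (insert v T).gcd id then 1 else 0) := by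
      simp_rw [mul_sum]
      rw [sum_comm]
      refine sum_congr rfl fun u _ => sum_congr rfl fun T _ => ?_
      split_ifs <;> ring
    _ = ∑ u ∈ S, divisorMoebius S f u * if u = v then 1 else 0 :=
      sum_congr rfl fun u hu => by rw [sum_powerset_coatoms_ite_dvd hv0 hu]
    _ = divisorMoebius S f v := by simp [hv]

end DivisorPoset

def invGcdAltSum (M : Finset ℕ) (v : ℕ) : ℚ :=
  ∑ T ∈ M.powerset, (-1) ^ T.card * (((insert v T).gcd id : ℕ) : ℚ)⁻¹

section AlternatingSum

variable {M : Finset ℕ} {v : ℕ}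

theorem invGcdAltSum_of_card_le_one (hMv : ∀ y ∈ M, y ∣ v) (hm : M.card ≤ 1) :
    invGcdAltSum M v = (v : ℚ)⁻¹ - ∑ y ∈ M, (y : ℚ)⁻¹ := by
  rw [invGcdAltSum, sum_powerset_neg_one_pow_mul_of_card_le_one _ fun T hT h2 =>
    absurd ((card_le_card hT).trans hm) (by omega)]
  simp only [insert_empty, gcd_singleton, id, normalize_eq]
  congr 1
  refine sum_congr rfl fun y hy => ?_
  rw [gcd_insert_of_forall_dvd (singleton_nonempty y) (by simpa using hMv y hy)]
  simp

theorem gcd_eq_ite_of_two_gcd_values {T₀ : Finset ℕ} (hT₀ : T₀ ⊆ M)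
    (hvals : ∀ T ⊆ M, 2 ≤ T.card → T.gcd id = T₀.gcd id ∨ T.gcd id = M.gcd id)
    {T : Finset ℕ} (hTM : T ⊆ M) (hT : 2 ≤ T.card) :
    T.gcd id = if T ⊆ M.filter (T₀.gcd id ∣ ·) then T₀.gcd id else M.gcd id := by
  split_ifs with hTK
  · have haT : T₀.gcd id ∣ T.gcd id := Finset.dvd_gcd fun y hy => (mem_filter.mp (hTK hy)).2
    rcases hvals T hTM hT with h | h
    · exact h
    · rw [h] at haT ⊢
      exact Nat.dvd_antisymm (gcd_mono hT₀) haT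
  · refine (hvals T hTM hT).resolve_left fun h => hTK fun y hy => ?_
    exact mem_filter.mpr ⟨hTM hy, h ▸ gcd_dvd hy⟩

theorem invGcdAltSum_pos_of_two_gcd_values (hv0 : 0 < v) (hMv : ∀ y ∈ M, y ∣ v)
    (hM : IsAntichain (· ∣ ·) (M : Set ℕ)) {T₀ : Finset ℕ} (hT₀ : T₀ ⊆ M)
    (hT₀card : 2 ≤ T₀.card)
    (hvals : ∀ T ⊆ M, 2 ≤ T.card → T.gcd id = T₀.gcd id ∨ T.gcd id = M.gcd id) :
    0 < invGcdAltSum M v := by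
  set a := T₀.gcd id
  set b := M.gcd id
  set K := M.filter (a ∣ ·)
  have hKM : K ⊆ M := filter_subset _ _
  have hK : 2 ≤ K.card :=
    hT₀card.trans (card_le_card fun y hy => mem_filter.mpr ⟨hT₀ hy, gcd_dvd hy⟩)
  have hgy : ∀ y ∈ M, (insert v ({y} : Finset ℕ)).gcd id = y := fun y hy => by
    rw [gcd_insert_of_forall_dvd (singleton_nonempty y) (by simpa using hMv y hy)]
    simp
  rw [invGcdAltSum, sum_powerset_neg_one_pow_mul_of_eq_ite hKM (card_pos.mp (by omega)) _ (b : ℚ)⁻¹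
    ((a : ℚ)⁻¹ - (b : ℚ)⁻¹) fun T hTM hT => by
      rw [gcd_insert_of_forall_dvd (card_pos.mp (by omega)) fun y hy => hMv y (hTM hy),
        gcd_eq_ite_of_two_gcd_values hT₀ hvals hTM hT]
      split_ifs <;> ring]
  have hterm : ∀ y ∈ M, ((((insert v ({y} : Finset ℕ)).gcd id : ℕ) : ℚ)⁻¹ - (b : ℚ)⁻¹ -
      if y ∈ K then (a : ℚ)⁻¹ - (b : ℚ)⁻¹ else 0) ≤ if y ∈ K then -((a : ℚ)⁻¹ / 2) else 0 := by
    intro y hy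
    have hy0 : 0 < y := Nat.pos_of_dvd_of_pos (hMv y hy) hv0
    rw [hgy y hy]
    split_ifs with hyK
    · obtain ⟨z, hzK, hzy⟩ := exists_mem_ne hK y
      have hay : a ≠ y := fun h =>
        hM (mem_coe.2 (hKM hyK)) (mem_coe.2 (hKM hzK)) hzy.symm (h ▸ (mem_filter.mp hzK).2)
      linarith [two_mul_inv_le_inv_of_dvd hy0 (mem_filter.mp hyK).2 hay]
    · have hb0 : (0 : ℚ) < b := by exact_mod_cast Nat.pos_of_dvd_of_pos (gcd_dvd hy) hy0
      linarith [inv_anti₀ hb0 (Nat.cast_le.mpr (Nat.le_of_dvd hy0 (gcd_dvd hy)))]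
  have hbound := sum_le_sum hterm
  rw [sum_ite_mem, inter_eq_right.mpr hKM, sum_const, nsmul_eq_mul] at hbound
  have hK2 : (2 : ℚ) ≤ K.card := by exact_mod_cast hK
  have hv : (0 : ℚ) < (v : ℚ)⁻¹ := by positivity
  have ha : (0 : ℚ) ≤ (a : ℚ)⁻¹ := by positivity
  simp only [insert_empty, gcd_singleton, id, normalize_eq]
  nlinarith

theorem invGcdAltSum_pos_of_gcd_pair_dvd (hv0 : 0 < v) (hMv : ∀ y ∈ M, y ∣ v)
    (hM : IsAntichain (· ∣ ·) (M : Set ℕ)) {y₁ y₂ y₃ : ℕ} (hM3 : M = {y₁, y₂, y₃})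
    (h12 : y₁ ≠ y₂) (h13 : y₁ ≠ y₃) (h23 : y₂ ≠ y₃) (hkey : Nat.gcd y₁ y₂ ∣ y₃) :
    0 < invGcdAltSum M v := by
  subst hM3
  have hdvd : ∀ T ⊆ ({y₁, y₂, y₃} : Finset ℕ), ∀ y ∈ T, y ∣ v := fun T hT y hy => hMv y (hT hy)
  rw [invGcdAltSum, sum_powerset_triple _ h12 h13 h23]
  simp (disch := simp [*]) only [gcd_insert_of_forall_dvd]
  simp only [gcd_insert, gcd_singleton, insert_empty, id, normalize_eq, gcd_eq_nat_gcd,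
    ← Nat.gcd_assoc, Nat.gcd_eq_left hkey]
  -- the sum is now `1/v - ∑ 1/yᵢ + 1/gcd(y₁, y₃) + 1/gcd(y₂, y₃)`
  have hpos : ∀ y ∈ ({y₁, y₂, y₃} : Finset ℕ), 0 < y := fun y hy =>
    Nat.pos_of_dvd_of_pos (hMv y hy) hv0
  have hgcd_ne : ∀ y ∈ ({y₁, y₂, y₃} : Finset ℕ), ∀ z ∈ ({y₁, y₂, y₃} : Finset ℕ), y ≠ z →
      Nat.gcd y z ≠ y := fun y hy z hz hne h =>
    hM (mem_coe.2 hy) (mem_coe.2 hz) hne (h ▸ Nat.gcd_dvd_right y z)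
  have hg13_y1 := two_mul_inv_le_inv_of_dvd (hpos y₁ (by simp)) (Nat.gcd_dvd_left y₁ y₃)
    (hgcd_ne y₁ (by simp) y₃ (by simp) h13)
  have hg13_y3 := two_mul_inv_le_inv_of_dvd (hpos y₃ (by simp)) (Nat.gcd_dvd_right y₁ y₃)
    (Nat.gcd_comm y₁ y₃ ▸ hgcd_ne y₃ (by simp) y₁ (by simp) h13.symm)
  have hg23_y2 := two_mul_inv_le_inv_of_dvd (hpos y₂ (by simp)) (Nat.gcd_dvd_left y₂ y₃)
    (hgcd_ne y₂ (by simp) y₃ (by simp) h23)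
  have hg23_y3 := two_mul_inv_le_inv_of_dvd (hpos y₃ (by simp)) (Nat.gcd_dvd_right y₂ y₃)
    (Nat.gcd_comm y₂ y₃ ▸ hgcd_ne y₃ (by simp) y₂ (by simp) h23.symm)
  have hv : (0 : ℚ) < (v : ℚ)⁻¹ := by positivity
  have hy₃ : (0 : ℚ) ≤ (y₃ : ℚ)⁻¹ := by positivity
  linarith

end AlternatingSum

theorem gcd_pair_dvd_of_card_le_three {M R : Finset ℕ} {y₁ y₂ y₃ : ℕ}
    (hM3 : M = {y₁, y₂, y₃}) (h12 : y₁ ≠ y₂) (h13 : y₁ ≠ y₃) (h23 : y₂ ≠ y₃)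
    (hjoint : ∀ T ⊆ M, 2 ≤ T.card → T.gcd id ∈ R) (hR : R.card ≤ 3) :
    Nat.gcd y₁ y₂ ∣ y₃ ∨ Nat.gcd y₁ y₃ ∣ y₂ ∨ Nat.gcd y₂ y₃ ∣ y₁ := by
  subst hM3
  -- otherwise the three pairwise gcds and the gcd of all three are distinct elements of `R`
  by_contra! h
  obtain ⟨n12, n13, n23⟩ := h
  set G := Nat.gcd y₁ (Nat.gcd y₂ y₃)
  have hsub : ({Nat.gcd y₁ y₂, Nat.gcd y₁ y₃, Nat.gcd y₂ y₃, G} : Finset ℕ) ⊆ R := by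
    have e12 := hjoint {y₁, y₂} (by simp [insert_subset_iff]) (by simp [card_pair h12])
    have e13 := hjoint {y₁, y₃} (by simp [insert_subset_iff]) (by simp [card_pair h13])
    have e23 := hjoint {y₂, y₃} (by simp) (by simp [card_pair h23])
    have eG := hjoint {y₁, y₂, y₃} subset_rfl
      (by rw [card_eq_three.mpr ⟨_, _, _, h12, h13, h23, rfl⟩]; omega)
    simp only [gcd_insert, gcd_singleton, id, normalize_eq, gcd_eq_nat_gcd] at e12 e13 e23 eG
    simp only [insert_subset_iff, singleton_subset_iff, e12, e13, e23, true_and]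
    exact eG
  have hG1 : G ∣ y₁ := Nat.gcd_dvd_left _ _
  have hG2 : G ∣ y₂ := (Nat.gcd_dvd_right _ _).trans (Nat.gcd_dvd_left _ _)
  have hG3 : G ∣ y₃ := (Nat.gcd_dvd_right _ _).trans (Nat.gcd_dvd_right _ _)
  have h4 : ({Nat.gcd y₁ y₂, Nat.gcd y₁ y₃, Nat.gcd y₂ y₃, G} : Finset ℕ).card = 4 := by
    rw [card_insert_of_notMem, card_insert_of_notMem, card_pair]
    · exact fun h => n23 (h ▸ hG1)
    · simp only [mem_insert, mem_singleton, not_or]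
      exact ⟨fun h => n13 (h ▸ Nat.gcd_dvd_left y₂ y₃), fun h => n13 (h ▸ hG2)⟩
    · simp only [mem_insert, mem_singleton, not_or]
      exact ⟨fun h => n12 (h ▸ Nat.gcd_dvd_right y₁ y₃), fun h => n12 (h ▸ Nat.gcd_dvd_right y₂ y₃),
        fun h => n12 (h ▸ hG3)⟩
  have := card_le_card hsub
  omega

theorem exists_two_gcd_values {M R : Finset ℕ} (hm : 2 ≤ M.card) (hm3 : M.card ≠ 3)
    (hjoint : ∀ T ⊆ M, 2 ≤ T.card → T.gcd id ∈ R) (hR : R.card + M.card ≤ 6) :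
    ∃ T₀ ⊆ M, 2 ≤ T₀.card ∧
      ∀ T ⊆ M, 2 ≤ T.card → T.gcd id = T₀.gcd id ∨ T.gcd id = M.gcd id := by
  by_cases h : ∃ T₀ ⊆ M, 2 ≤ T₀.card ∧ T₀.gcd id ≠ M.gcd id
  · obtain ⟨T₀, hT₀, hT₀card, hne⟩ := h
    have hm4 : 4 ≤ M.card := by
      by_contra
      exact hne (by rw [eq_of_subset_of_card_le hT₀ (by omega)])
    refine ⟨T₀, hT₀, hT₀card, fun T hT h2 => ?_⟩
    by_contra! h
    have hsub : ({T.gcd id, T₀.gcd id, M.gcd id} : Finset ℕ) ⊆ R := by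
      simp [insert_subset_iff, hjoint T hT h2, hjoint T₀ hT₀ hT₀card, hjoint M subset_rfl hm]
    have := card_le_card hsub
    rw [card_eq_three.mpr ⟨_, _, _, h.1, h.2, hne, rfl⟩] at this
    omega
  · push Not at h
    exact ⟨M, subset_rfl, hm, fun T hT h2 => Or.inr (h T hT h2)⟩

theorem divisorMoebius_inv_ne_zero {S : Finset ℕ} (hS0 : 0 ∉ S)
    (hS : ∀ a ∈ S, ∀ b ∈ S, Nat.gcd a b ∈ S) (hcard : S.card ≤ 7) {v : ℕ} (hv : v ∈ S) :
    divisorMoebius S (fun n : ℕ => (n : ℚ)⁻¹) v ≠ 0 := by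
  have hv0 : 0 < v := Nat.pos_of_ne_zero fun h => hS0 (h ▸ hv)
  rw [divisorMoebius_eq_sum_powerset_coatoms hS0 hS _ hv]
  change invGcdAltSum (coatoms S v) v ≠ 0
  set M := coatoms S v
  have hMv : ∀ y ∈ M, y ∣ v := fun y hy => dvd_of_mem_coatoms hy
  have hM := isAntichain_coatoms (S := S) v
  have hjoint : ∀ T ⊆ M, 2 ≤ T.card → T.gcd id ∈ S \ insert v M :=
    fun T hT h2 => gcd_mem_sdiff_of_two_le_card hS hT h2
  have hR : (S \ insert v M).card + M.card ≤ 6 := by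
    have := card_sdiff_add_card_eq_card (insert_subset hv (coatoms_subset v) : insert v M ⊆ S)
    rw [card_insert_of_notMem (s := M) fun h => ne_of_mem_coatoms h rfl] at this
    omega
  rcases le_or_gt M.card 1 with hm | hm
  · rw [invGcdAltSum_of_card_le_one hMv hm]
    rcases M.eq_empty_or_nonempty with hM0 | hM0
    · simp [hM0, hv0.ne']
    · obtain ⟨y, hMy⟩ := card_eq_one.mp (le_antisymm hm (card_pos.mpr hM0))
      have hy : y ∈ M := hMy ▸ mem_singleton_self y
      rw [hMy, sum_singleton, sub_ne_zero, Ne, inv_inj, Nat.cast_inj]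
      exact (ne_of_mem_coatoms hy).symm
  rcases eq_or_ne M.card 3 with hm3 | hm3
  · obtain ⟨y₁, y₂, y₃, h12, h13, h23, hM3⟩ := card_eq_three.mp hm3
    rcases gcd_pair_dvd_of_card_le_three hM3 h12 h13 h23 hjoint (by omega) with h | h | h
    · exact (invGcdAltSum_pos_of_gcd_pair_dvd hv0 hMv hM hM3 h12 h13 h23 h).ne'
    · exact (invGcdAltSum_pos_of_gcd_pair_dvd hv0 hMv hM (hM3.trans (by rw [pair_comm])) h13 h12
        h23.symm h).ne'
    · exact (invGcdAltSum_pos_of_gcd_pair_dvd hv0 hMv hM (hM3.trans (by ext; simp; tauto)) h23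
        h12.symm h13.symm h).ne'
  · obtain ⟨T₀, hT₀, hT₀card, hvals⟩ := exists_two_gcd_values hm hm3 hjoint hR
    exact (invGcdAltSum_pos_of_two_gcd_values hv0 hMv hM hT₀ hT₀card hvals).ne'

theorem stmt10 (S : Finset ℕ) (h0 : 0 ∉ S)
    (hg : ∀ a ∈ S, ∀ b ∈ S, Nat.gcd a b ∈ S)
    (hcard : S.card ≤ 7) :
    (Matrix.of fun a b : {x // x ∈ S} => (Nat.lcm a.1 b.1 : ℚ)).det ≠ 0 := by
  rw [det_lcm_matrix h0 hg]
  refine mul_ne_zero (pow_ne_zero _ (prod_ne_zero_iff.mpr fun a _ => ?_))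
    (prod_ne_zero_iff.mpr fun a _ => divisorMoebius_inv_ne_zero h0 hg hcard a.2)
  exact Nat.cast_ne_zero.mpr fun h => h0 (h ▸ a.2)
end

section
/- Let n ≥ 8 and let S = {x_1,...,x_n} be an (n−7)-fold GCD closed set of positive integers. Then the LCM matrix [S] is nonsingular. -/
/-!
`R` is a divisor chain below `m = min (S \ R)`, and `m` divides every element of the GCD-closed
set `S \ R`; hence `S` is GCD closed. For a GCD-closed `S`, let `α` be the Möbius inversion of
`v ↦ 1 / v` over the divisibility order of `S`. Then `1 / gcd(a, b) = ∑_{c ∈ S, c ∣ a, c ∣ b} α c`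
factors `[S]` as `D E diag(α) Eᵀ D` with `E` unitriangular, so `det [S] = (∏ a)² ∏ α a` and it
remains to show `α v ≠ 0`.

For `v ∣ m` the proper divisors of `v` form a chain, so `α v = 1 / v - 1 / v'` with `v'` the largest
of them. Above `m`, `α` coincides with the weight of the at most 7-element GCD-closed set
`S \ R`, where `α v = 0` would mean that the at most 6 proper divisors `P` of `v` have
`∑_P α = 1 / v`. If `P` has one maximal element `d`, that sum is `1 / d > 1 / v`. Otherwise it is
`≤ 0`: with two or three maximal elements by inclusion–exclusion and `1 / d ≤ 1 / (2 g)` for a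
proper divisor `g` of `d` (with three, counting shows the gcd of two of them divides the third),
and with four or more because the non-maximal elements then form a chain.
-/

open scoped Classical
open Finset

def IsGcdClosed (S : Finset ℕ) : Prop := ∀ a ∈ S, ∀ b ∈ S, Nat.gcd a b ∈ S

lemma IsGcdClosed.min'_dvd {S : Finset ℕ} (hS : IsGcdClosed S) (hS0 : 0 ∉ S) (hne : S.Nonempty)
    {w : ℕ} (hw : w ∈ S) : S.min' hne ∣ w := by
  have hg := hS _ (min'_mem S hne) _ hw
  have hle : Nat.gcd (S.min' hne) w ≤ S.min' hne :=
    Nat.le_of_dvd (Nat.pos_of_ne_zero (ne_of_mem_of_not_mem (min'_mem S hne) hS0))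
      (Nat.gcd_dvd_left _ _)
  rw [← le_antisymm hle (min'_le S _ hg)]
  exact Nat.gcd_dvd_right _ _

lemma IsGcdClosed.union_of_isChain {R W : Finset ℕ} (hR : IsChain (· ∣ ·) (R : Set ℕ))
    (hW : IsGcdClosed W) (hRW : ∀ a ∈ R, ∀ w ∈ W, a ∣ w) : IsGcdClosed (R ∪ W) := by
  have hchain : ∀ a ∈ R, ∀ b ∈ R, Nat.gcd a b ∈ R := by
    intro a ha b hb
    rcases eq_or_ne a b with rfl | hab
    · rwa [Nat.gcd_self]
    rcases hR ha hb hab with h | h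
    · rwa [Nat.gcd_eq_left h]
    · rwa [Nat.gcd_eq_right h]
  intro a ha b hb
  rcases mem_union.mp ha with ha | ha <;> rcases mem_union.mp hb with hb | hb
  · exact mem_union_left _ (hchain a ha b hb)
  · rw [Nat.gcd_eq_left (hRW a ha b hb)]; exact mem_union_left _ ha
  · rw [Nat.gcd_eq_right (hRW b hb a ha)]; exact mem_union_left _ hb
  · exact mem_union_right _ (hW a ha b hb)

lemma IsGcdClosed.inter_properDivisors {S : Finset ℕ} (hS : IsGcdClosed S) (hS0 : 0 ∉ S)
    (v : ℕ) : IsGcdClosed (S ∩ v.properDivisors) := by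
  intro a ha b hb
  obtain ⟨haS, hav, halt⟩ := by simpa only [mem_inter, Nat.mem_properDivisors] using ha
  obtain ⟨hbS, -, -⟩ := by simpa only [mem_inter, Nat.mem_properDivisors] using hb
  have : Nat.gcd a b ≤ a :=
    Nat.le_of_dvd (Nat.pos_of_ne_zero (ne_of_mem_of_not_mem haS hS0)) (Nat.gcd_dvd_left a b)
  simp only [mem_inter, Nat.mem_properDivisors]
  exact ⟨hS a haS b hbS, (Nat.gcd_dvd_left a b).trans hav, by omega⟩

lemma IsChain.dvd_max' {D : Finset ℕ} (hD0 : 0 ∉ D) (hD : IsChain (· ∣ ·) (D : Set ℕ))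
    (hne : D.Nonempty) {w : ℕ} (hw : w ∈ D) : w ∣ D.max' hne := by
  rcases eq_or_ne w (D.max' hne) with h | h
  · rw [h]
  refine (hD hw (max'_mem D hne) h).resolve_right fun hdvd => h ?_
  exact le_antisymm (le_max' D w hw)
    (Nat.le_of_dvd (Nat.pos_of_ne_zero (ne_of_mem_of_not_mem hw hD0)) hdvd)

lemma inv_add_inv_le_inv_of_dvd {a b : ℕ} (hb : b ≠ 0) (hab : a ∣ b) (hne : a ≠ b) :
    (b : ℚ)⁻¹ + (b : ℚ)⁻¹ ≤ (a : ℚ)⁻¹ := by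
  obtain ⟨c, rfl⟩ := hab
  have hc : 2 ≤ c := by
    rcases c with _ | _ | c
    · simp at hb
    · simp at hne
    · omega
  have ha : (0 : ℚ) < a := by exact_mod_cast Nat.pos_of_ne_zero (left_ne_zero_of_mul hb)
  have hc' : (2 : ℚ) ≤ c := by exact_mod_cast hc
  rw [← two_mul, Nat.cast_mul, mul_inv, ← mul_assoc]
  calc 2 * (a : ℚ)⁻¹ * (c : ℚ)⁻¹ ≤ 2 * (a : ℚ)⁻¹ * 2⁻¹ := by gcongr
    _ = (a : ℚ)⁻¹ := by ring

def dvdMaximals (P : Finset ℕ) : Finset ℕ := {d ∈ P | ∀ w ∈ P, d ∣ w → w = d}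

lemma dvdMaximals_subset (P : Finset ℕ) : dvdMaximals P ⊆ P := filter_subset _ _

lemma exists_mem_dvdMaximals_dvd {P : Finset ℕ} (hP0 : 0 ∉ P) {v : ℕ} (hv : v ∈ P) :
    ∃ d ∈ dvdMaximals P, v ∣ d := by
  have hne : ({w ∈ P | v ∣ w} : Finset ℕ).Nonempty := ⟨v, mem_filter.mpr ⟨hv, dvd_rfl⟩⟩
  obtain ⟨hdP, hvd⟩ := mem_filter.mp (max'_mem _ hne)
  refine ⟨_, mem_filter.mpr ⟨hdP, fun w hw hdw => ?_⟩, hvd⟩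
  exact le_antisymm (le_max' _ w (mem_filter.mpr ⟨hw, hvd.trans hdw⟩))
    (Nat.le_of_dvd (Nat.pos_of_ne_zero (ne_of_mem_of_not_mem hw hP0)) hdw)

lemma not_dvd_of_mem_dvdMaximals {P : Finset ℕ} {d d' : ℕ} (hd : d ∈ dvdMaximals P)
    (hd' : d' ∈ dvdMaximals P) (hne : d ≠ d') : ¬ d ∣ d' :=
  fun hdvd => hne ((mem_filter.mp hd).2 d' (dvdMaximals_subset P hd') hdvd).symm

lemma exists_mem_sdiff_dvdMaximals_forall_dvd {P : Finset ℕ} (hP0 : 0 ∉ P) (hP : IsGcdClosed P)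
    (hM : 2 ≤ #(dvdMaximals P)) : ∃ m ∈ P \ dvdMaximals P, ∀ w ∈ P, m ∣ w := by
  have hPne : P.Nonempty := (card_pos.mp (by omega)).mono (dvdMaximals_subset P)
  have hdvd : ∀ w ∈ P, P.min' hPne ∣ w := fun w hw => hP.min'_dvd hP0 hPne hw
  refine ⟨P.min' hPne, mem_sdiff.mpr ⟨min'_mem P hPne, fun hm => ?_⟩, hdvd⟩
  have hsub : dvdMaximals P ⊆ {P.min' hPne} := fun d hd =>
    have hdP := dvdMaximals_subset P hd
    mem_singleton.mpr ((mem_filter.mp hm).2 d hdP (hdvd d hdP))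
  have := card_le_card hsub
  rw [card_singleton] at this
  omega

lemma seven_le_card_of_not_gcd_dvd {P : Finset ℕ} (hP : IsGcdClosed P) {x y z : ℕ}
    (hx : x ∈ P) (hy : y ∈ P) (hz : z ∈ P) (hxy : ¬ x ∣ y) (hyx : ¬ y ∣ x) (hxz : ¬ x ∣ z)
    (hzx : ¬ z ∣ x) (hyz : ¬ y ∣ z) (hzy : ¬ z ∣ y) (hxyz : ¬ Nat.gcd x y ∣ z)
    (hxzy : ¬ Nat.gcd x z ∣ y) (hyzx : ¬ Nat.gcd y z ∣ x) : 7 ≤ #P := by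
  let L := [x, y, z, Nat.gcd x y, Nat.gcd x z, Nat.gcd y z, Nat.gcd (Nat.gcd x y) z]
  -- the seven elements have pairwise different patterns of divisibility into `x`, `y`, `z`
  let pattern : ℕ → Bool × Bool × Bool := fun w => (decide (w ∣ x), decide (w ∣ y), decide (w ∣ z))
  have hgx : Nat.gcd (Nat.gcd x y) z ∣ x := (Nat.gcd_dvd_left _ _).trans (Nat.gcd_dvd_left _ _)
  have hgy : Nat.gcd (Nat.gcd x y) z ∣ y := (Nat.gcd_dvd_left _ _).trans (Nat.gcd_dvd_right _ _)
  have hpattern : L.map pattern = [(true, false, false), (false, true, false), (false, false, true),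
      (true, true, false), (true, false, true), (false, true, true), (true, true, true)] := by
    simp [L, pattern, *, Nat.gcd_dvd_left, Nat.gcd_dvd_right]
  have hnodup : L.Nodup := List.Nodup.of_map pattern (by rw [hpattern]; decide)
  have hsub : L.toFinset ⊆ P := by
    intro w hw
    simp only [L, List.toFinset_cons, List.toFinset_nil, mem_insert,
      notMem_empty, or_false] at hw
    rcases hw with rfl | rfl | rfl | rfl | rfl | rfl | rfl
    all_goals first | assumption | exact hP _ ‹_› _ ‹_› | exact hP _ (hP _ hx _ hy) _ hz
  calc 7 = #L.toFinset := (List.toFinset_card_of_nodup hnodup).symm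
    _ ≤ #P := card_le_card hsub

lemma filter_dvd_eq_insert_inter_properDivisors {S : Finset ℕ} {v : ℕ} (hv : v ∈ S)
    (hv0 : v ≠ 0) : {w ∈ S | w ∣ v} = insert v (S ∩ v.properDivisors) := by
  ext w
  simp only [mem_filter, mem_insert, mem_inter, Nat.mem_properDivisors]
  constructor
  · rintro ⟨hw, hwv⟩
    rcases (Nat.le_of_dvd (Nat.pos_of_ne_zero hv0) hwv).eq_or_lt with rfl | hlt
    · exact Or.inl rfl
    · exact Or.inr ⟨hw, hwv, hlt⟩
  · rintro (rfl | ⟨hw, hwv, -⟩)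
    · exact ⟨hv, dvd_rfl⟩
    · exact ⟨hw, hwv⟩

/-- Möbius inversion of `v ↦ 1 / v` over the divisibility order of `S`. -/
noncomputable def invGcdWeight (S : Finset ℕ) (v : ℕ) : ℚ :=
  (v : ℚ)⁻¹ - ∑ w ∈ (S ∩ v.properDivisors).attach, invGcdWeight S w
termination_by v
decreasing_by exact (Nat.mem_properDivisors.mp (mem_inter.mp w.2).2).2

lemma invGcdWeight_eq (S : Finset ℕ) (v : ℕ) :
    invGcdWeight S v = (v : ℚ)⁻¹ - ∑ w ∈ S ∩ v.properDivisors, invGcdWeight S w := by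
  rw [invGcdWeight, sum_attach]

def HasInvDivisorSums (P : Finset ℕ) (β : ℕ → ℚ) : Prop :=
  ∀ v ∈ P, ∑ w ∈ {w ∈ P | w ∣ v}, β w = (v : ℚ)⁻¹

lemma hasInvDivisorSums_invGcdWeight {S : Finset ℕ} (hS0 : 0 ∉ S) :
    HasInvDivisorSums S (invGcdWeight S) := by
  intro v hv
  rw [filter_dvd_eq_insert_inter_properDivisors hv (ne_of_mem_of_not_mem hv hS0),
    sum_insert (by simp), invGcdWeight_eq]
  ring

namespace HasInvDivisorSums

variable {P : Finset ℕ} {β : ℕ → ℚ}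

lemma of_subset {S : Finset ℕ} (h : HasInvDivisorSums S β) (hPS : P ⊆ S)
    (hdown : ∀ w ∈ P, ∀ z ∈ S, z ∣ w → z ∈ P) : HasInvDivisorSums P β := by
  intro v hv
  rw [← h v (hPS hv)]
  congr 1
  ext z
  simp only [mem_filter]
  exact ⟨fun hz => ⟨hPS hz.1, hz.2⟩, fun hz => ⟨hdown v hv z hz.1 hz.2, hz.2⟩⟩

lemma inter_properDivisors (h : HasInvDivisorSums P β) (hP0 : 0 ∉ P) (v : ℕ) :
    HasInvDivisorSums (P ∩ v.properDivisors) β := by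
  refine h.of_subset inter_subset_left fun w hw z hz hzw => ?_
  obtain ⟨hwP, hwv, hwlt⟩ := by simpa only [mem_inter, Nat.mem_properDivisors] using hw
  have hzw' : z ≤ w := Nat.le_of_dvd (Nat.pos_of_ne_zero (ne_of_mem_of_not_mem hwP hP0)) hzw
  simp only [mem_inter, Nat.mem_properDivisors]
  exact ⟨hz, hzw.trans hwv, by omega⟩

lemma sum_eq_inv_of_forall_dvd (h : HasInvDivisorSums P β) {t : ℕ} (ht : t ∈ P)
    (hdvd : ∀ w ∈ P, w ∣ t) : ∑ w ∈ P, β w = (t : ℚ)⁻¹ := by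
  rw [← h t ht, filter_true_of_mem hdvd]

lemma sum_eq_inv_max'_of_isChain (h : HasInvDivisorSums P β) (hP0 : 0 ∉ P)
    (hP : IsChain (· ∣ ·) (P : Set ℕ)) (hne : P.Nonempty) :
    ∑ w ∈ P, β w = (P.max' hne : ℚ)⁻¹ :=
  h.sum_eq_inv_of_forall_dvd (max'_mem P hne) fun _ hw => hP.dvd_max' hP0 hne hw

lemma apply_eq_inv_sub_sum (h : HasInvDivisorSums P β) (hP0 : 0 ∉ P) {v : ℕ} (hv : v ∈ P) :
    β v = (v : ℚ)⁻¹ - ∑ w ∈ P ∩ v.properDivisors, β w := by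
  rw [← h v hv, filter_dvd_eq_insert_inter_properDivisors hv (ne_of_mem_of_not_mem hv hP0),
    sum_insert (by simp)]
  ring

lemma sum_union_filter_dvd (h : HasInvDivisorSums P β) (hP : IsGcdClosed P) {a b : ℕ}
    (ha : a ∈ P) (hb : b ∈ P) :
    ∑ w ∈ {w ∈ P | w ∣ a} ∪ {w ∈ P | w ∣ b}, β w
      = (a : ℚ)⁻¹ + (b : ℚ)⁻¹ - (Nat.gcd a b : ℚ)⁻¹ := by
  have hinter : {w ∈ P | w ∣ a} ∩ {w ∈ P | w ∣ b} = {w ∈ P | w ∣ Nat.gcd a b} := by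
    ext w
    simp only [mem_inter, mem_filter, Nat.dvd_gcd_iff]
    tauto
  have := sum_union_inter (s₁ := {w ∈ P | w ∣ a}) (s₂ := {w ∈ P | w ∣ b}) (f := β)
  rw [hinter, h a ha, h b hb, h _ (hP a ha b hb)] at this
  linarith

lemma sum_nonpos_of_cover_two (h : HasInvDivisorSums P β) (hP0 : 0 ∉ P) (hP : IsGcdClosed P)
    {x y : ℕ} (hx : x ∈ P) (hy : y ∈ P) (hxy : ¬ x ∣ y) (hyx : ¬ y ∣ x)
    (hcover : ∀ v ∈ P, v ∣ x ∨ v ∣ y) : ∑ v ∈ P, β v ≤ 0 := by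
  have hP_eq : P = {w ∈ P | w ∣ x} ∪ {w ∈ P | w ∣ y} := by
    ext w
    have := hcover w
    simp only [mem_union, mem_filter]
    tauto
  rw [hP_eq, h.sum_union_filter_dvd hP hx hy]
  have hgx := inv_add_inv_le_inv_of_dvd (ne_of_mem_of_not_mem hx hP0) (Nat.gcd_dvd_left x y)
    fun he => hxy (he ▸ Nat.gcd_dvd_right x y)
  have hgy := inv_add_inv_le_inv_of_dvd (ne_of_mem_of_not_mem hy hP0) (Nat.gcd_dvd_right x y)
    fun he => hyx (he ▸ Nat.gcd_dvd_left x y)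
  have : (0 : ℚ) ≤ (x : ℚ)⁻¹ := by positivity
  have : (0 : ℚ) ≤ (y : ℚ)⁻¹ := by positivity
  linarith

lemma sum_nonpos_of_cover_three (h : HasInvDivisorSums P β) (hP0 : 0 ∉ P) (hP : IsGcdClosed P)
    {x y z : ℕ} (hx : x ∈ P) (hy : y ∈ P) (hz : z ∈ P) (hxz : ¬ x ∣ z) (hzx : ¬ z ∣ x)
    (hyz : ¬ y ∣ z) (hxyz : Nat.gcd x y ∣ z) (hcover : ∀ v ∈ P, v ∣ x ∨ v ∣ y ∨ v ∣ z) :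
    ∑ v ∈ P, β v ≤ 0 := by
  set A := {w ∈ P | w ∣ x} ∪ {w ∈ P | w ∣ z}
  have hP_eq : P = A ∪ {w ∈ P | w ∣ y} := by
    ext w
    have := hcover w
    simp only [A, mem_union, mem_filter]
    tauto
  have hinter : A ∩ {w ∈ P | w ∣ y} = {w ∈ P | w ∣ Nat.gcd z y} := by
    ext w
    simp only [A, mem_inter, mem_union, mem_filter, Nat.dvd_gcd_iff]
    have : w ∣ x → w ∣ y → w ∣ z := fun hwx hwy => (Nat.dvd_gcd hwx hwy).trans hxyz
    tauto
  have hsum := sum_union_inter (s₁ := A) (s₂ := {w ∈ P | w ∣ y}) (f := β)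
  rw [hinter, h.sum_union_filter_dvd hP hx hz, h y hy, h _ (hP z hz y hy)] at hsum
  rw [hP_eq]
  have hgx := inv_add_inv_le_inv_of_dvd (ne_of_mem_of_not_mem hx hP0) (Nat.gcd_dvd_left x z)
    fun he => hxz (he ▸ Nat.gcd_dvd_right x z)
  have hgz := inv_add_inv_le_inv_of_dvd (ne_of_mem_of_not_mem hz hP0) (Nat.gcd_dvd_right x z)
    fun he => hzx (he ▸ Nat.gcd_dvd_left x z)
  have hgy := inv_add_inv_le_inv_of_dvd (ne_of_mem_of_not_mem hy hP0) (Nat.gcd_dvd_right z y)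
    fun he => hyz (he ▸ Nat.gcd_dvd_left z y)
  have : (0 : ℚ) ≤ (y : ℚ)⁻¹ := by positivity
  linarith

lemma apply_le_neg_half_inv_of_isChain (h : HasInvDivisorSums P β) (hP0 : 0 ∉ P) {d : ℕ}
    (hd : d ∈ P) (hne : (P ∩ d.properDivisors).Nonempty)
    (hchain : IsChain (· ∣ ·) ((P ∩ d.properDivisors : Finset ℕ) : Set ℕ)) {t : ℕ}
    (ht : ∀ w ∈ P ∩ d.properDivisors, w ≤ t) : β d ≤ -((t : ℚ)⁻¹ / 2) := by
  set D := P ∩ d.properDivisors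
  have hD0 : 0 ∉ D := by simp [D]
  rw [h.apply_eq_inv_sub_sum hP0 hd,
    (h.inter_properDivisors hP0 d).sum_eq_inv_max'_of_isChain hD0 hchain hne]
  obtain ⟨hsd, hslt⟩ := Nat.mem_properDivisors.mp (mem_inter.mp (max'_mem D hne)).2
  have hs0 : D.max' hne ≠ 0 := ne_of_mem_of_not_mem (max'_mem D hne) hD0
  have hds := inv_add_inv_le_inv_of_dvd (ne_of_mem_of_not_mem hd hP0) hsd hslt.ne
  have hst : ((t : ℚ))⁻¹ ≤ ((D.max' hne : ℕ) : ℚ)⁻¹ :=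
    inv_anti₀ (by exact_mod_cast Nat.pos_of_ne_zero hs0) (by exact_mod_cast ht _ (max'_mem D hne))
  linarith

lemma sum_nonpos_of_isChain_sdiff_dvdMaximals (h : HasInvDivisorSums P β) (hP0 : 0 ∉ P)
    (hP : IsGcdClosed P) (hM : 2 ≤ #(dvdMaximals P))
    (hN : IsChain (· ∣ ·) ((P \ dvdMaximals P : Finset ℕ) : Set ℕ)) : ∑ v ∈ P, β v ≤ 0 := by
  set M := dvdMaximals P
  set N := P \ M
  obtain ⟨m, hmN, hm⟩ := exists_mem_sdiff_dvdMaximals_forall_dvd hP0 hP hM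
  have hNne : N.Nonempty := ⟨m, hmN⟩
  have hN0 : 0 ∉ N := fun h0 => hP0 (mem_sdiff.mp h0).1
  set t := N.max' hNne
  have ht0 : (0 : ℚ) < t := by
    exact_mod_cast Nat.pos_of_ne_zero (ne_of_mem_of_not_mem (max'_mem N hNne) hN0)
  have hNsum : ∑ w ∈ N, β w = (t : ℚ)⁻¹ := by
    refine (h.of_subset sdiff_subset fun w hw z hz hzw => ?_).sum_eq_inv_max'_of_isChain hN0 hN hNne
    refine mem_sdiff.mpr ⟨hz, fun hzM => (mem_sdiff.mp hw).2 ?_⟩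
    rwa [(mem_filter.mp hzM).2 w (mem_sdiff.mp hw).1 hzw]
  have hMbound : ∀ d ∈ M, β d ≤ -((t : ℚ)⁻¹ / 2) := by
    intro d hd
    have hdP := dvdMaximals_subset P hd
    have hDN : P ∩ d.properDivisors ⊆ N := by
      intro w hw
      obtain ⟨hwP, hwd, hwlt⟩ := by simpa only [mem_inter, Nat.mem_properDivisors] using hw
      refine mem_sdiff.mpr ⟨hwP, fun hwM => ?_⟩
      exact hwlt.ne ((mem_filter.mp hwM).2 d hdP hwd).symm
    have hmd : m ∈ P ∩ d.properDivisors := by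
      have hmd : m ≠ d := fun he => (mem_sdiff.mp hmN).2 (he ▸ hd)
      simp only [mem_inter, Nat.mem_properDivisors]
      exact ⟨(mem_sdiff.mp hmN).1, hm d hdP,
        lt_of_le_of_ne (Nat.le_of_dvd (Nat.pos_of_ne_zero (ne_of_mem_of_not_mem hdP hP0))
          (hm d hdP)) hmd⟩
    exact h.apply_le_neg_half_inv_of_isChain hP0 hdP ⟨m, hmd⟩ (hN.mono (coe_subset.mpr hDN))
      fun w hw => le_max' N w (hDN hw)
  have hMsum := sum_le_card_nsmul M β _ hMbound
  rw [← sum_sdiff (dvdMaximals_subset P), hNsum]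
  rw [nsmul_eq_mul] at hMsum
  have hM' : (2 : ℚ) ≤ #M := by exact_mod_cast hM
  have : (0 : ℚ) < (t : ℚ)⁻¹ := inv_pos.mpr ht0
  nlinarith

lemma sum_nonpos_of_card_dvdMaximals_eq_two (h : HasInvDivisorSums P β) (hP0 : 0 ∉ P)
    (hP : IsGcdClosed P) (hM : #(dvdMaximals P) = 2) : ∑ v ∈ P, β v ≤ 0 := by
  obtain ⟨x, y, hxy, hM_eq⟩ := card_eq_two.mp hM
  have hx : x ∈ dvdMaximals P := by simp [hM_eq]
  have hy : y ∈ dvdMaximals P := by simp [hM_eq]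
  exact h.sum_nonpos_of_cover_two hP0 hP (dvdMaximals_subset P hx) (dvdMaximals_subset P hy)
    (not_dvd_of_mem_dvdMaximals hx hy hxy) (not_dvd_of_mem_dvdMaximals hy hx hxy.symm)
    fun v hv => by simpa [hM_eq] using exists_mem_dvdMaximals_dvd hP0 hv

lemma sum_nonpos_of_card_dvdMaximals_eq_three (h : HasInvDivisorSums P β) (hP0 : 0 ∉ P)
    (hP : IsGcdClosed P) (hcard : #P ≤ 6) (hM : #(dvdMaximals P) = 3) : ∑ v ∈ P, β v ≤ 0 := by
  obtain ⟨x, y, z, hxy, hxz, hyz, hM_eq⟩ := card_eq_three.mp hM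
  have hx : x ∈ dvdMaximals P := by simp [hM_eq]
  have hy : y ∈ dvdMaximals P := by simp [hM_eq]
  have hz : z ∈ dvdMaximals P := by simp [hM_eq]
  have hMP := dvdMaximals_subset P
  have hcover : ∀ v ∈ P, v ∣ x ∨ v ∣ y ∨ v ∣ z := fun v hv => by
    simpa [hM_eq] using exists_mem_dvdMaximals_dvd hP0 hv
  have hnd := fun {a b} (ha : a ∈ dvdMaximals P) (hb : b ∈ dvdMaximals P) (hab : a ≠ b) =>
    not_dvd_of_mem_dvdMaximals ha hb hab
  by_cases hxyz : Nat.gcd x y ∣ z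
  · exact h.sum_nonpos_of_cover_three hP0 hP (hMP hx) (hMP hy) (hMP hz) (hnd hx hz hxz)
      (hnd hz hx hxz.symm) (hnd hy hz hyz) hxyz hcover
  by_cases hxzy : Nat.gcd x z ∣ y
  · exact h.sum_nonpos_of_cover_three hP0 hP (hMP hx) (hMP hz) (hMP hy) (hnd hx hy hxy)
      (hnd hy hx hxy.symm) (hnd hz hy hyz.symm) hxzy fun v hv => by have := hcover v hv; tauto
  by_cases hyzx : Nat.gcd y z ∣ x
  · exact h.sum_nonpos_of_cover_three hP0 hP (hMP hy) (hMP hz) (hMP hx) (hnd hy hx hxy.symm)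
      (hnd hx hy hxy) (hnd hz hx hxz.symm) hyzx fun v hv => by have := hcover v hv; tauto
  have := seven_le_card_of_not_gcd_dvd hP (hMP hx) (hMP hy) (hMP hz) (hnd hx hy hxy)
    (hnd hy hx hxy.symm) (hnd hx hz hxz) (hnd hz hx hxz.symm) (hnd hy hz hyz)
    (hnd hz hy hyz.symm) hxyz hxzy hyzx
  omega

lemma sum_nonpos_of_two_le_card_dvdMaximals (h : HasInvDivisorSums P β) (hP0 : 0 ∉ P)
    (hP : IsGcdClosed P) (hcard : #P ≤ 6) (hM : 2 ≤ #(dvdMaximals P)) :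
    ∑ v ∈ P, β v ≤ 0 := by
  rcases (show #(dvdMaximals P) = 2 ∨ #(dvdMaximals P) = 3 ∨ 4 ≤ #(dvdMaximals P) by omega)
    with hM2 | hM3 | hM4
  · exact h.sum_nonpos_of_card_dvdMaximals_eq_two hP0 hP hM2
  · exact h.sum_nonpos_of_card_dvdMaximals_eq_three hP0 hP hcard hM3
  · refine h.sum_nonpos_of_isChain_sdiff_dvdMaximals hP0 hP hM ?_
    -- at most two elements are not maximal, one of them dividing all of `P`
    obtain ⟨m, hmN, hm⟩ := exists_mem_sdiff_dvdMaximals_forall_dvd hP0 hP hM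
    have hNcard : #(P \ dvdMaximals P) ≤ 2 := by
      rw [card_sdiff_of_subset (dvdMaximals_subset P)]; omega
    intro a ha b hb hab
    by_cases ham : a = m
    · exact Or.inl (ham ▸ hm b (mem_sdiff.mp hb).1)
    by_cases hbm : b = m
    · exact Or.inr (hbm ▸ hm a (mem_sdiff.mp ha).1)
    have := two_lt_card.mpr ⟨m, hmN, a, ha, b, hb, Ne.symm ham, Ne.symm hbm, hab⟩
    omega

end HasInvDivisorSums

lemma invGcdWeight_ne_zero_of_isChain {S : Finset ℕ} (hS0 : 0 ∉ S) {v : ℕ} (hv : v ∈ S)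
    (hchain : IsChain (· ∣ ·) ((S ∩ v.properDivisors : Finset ℕ) : Set ℕ)) :
    invGcdWeight S v ≠ 0 := by
  have hv0 : (0 : ℚ) < v := by exact_mod_cast Nat.pos_of_ne_zero (ne_of_mem_of_not_mem hv hS0)
  rw [invGcdWeight_eq]
  set D := S ∩ v.properDivisors
  rcases D.eq_empty_or_nonempty with hD | hD
  · rw [hD, sum_empty, sub_zero]
    exact (inv_pos.mpr hv0).ne'
  have hD0 : 0 ∉ D := by simp [D]
  rw [((hasInvDivisorSums_invGcdWeight hS0).inter_properDivisors hS0 v).sum_eq_inv_max'_of_isChain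
    hD0 hchain hD, sub_ne_zero]
  have ht := (Nat.mem_properDivisors.mp (mem_inter.mp (max'_mem D hD)).2).2
  have ht0 : (0 : ℚ) < D.max' hD := by
    exact_mod_cast Nat.pos_of_ne_zero (ne_of_mem_of_not_mem (max'_mem D hD) hD0)
  exact (inv_strictAnti₀ ht0 (by exact_mod_cast ht : ((D.max' hD : ℕ) : ℚ) < v)).ne

theorem invGcdWeight_ne_zero_of_card_le_seven {S : Finset ℕ} (hS0 : 0 ∉ S) (hS : IsGcdClosed S)
    (hcard : #S ≤ 7) {v : ℕ} (hv : v ∈ S) : invGcdWeight S v ≠ 0 := by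
  rw [invGcdWeight_eq, sub_ne_zero]
  set P := S ∩ v.properDivisors
  have h := (hasInvDivisorSums_invGcdWeight hS0).inter_properDivisors hS0 v
  have hP0 : 0 ∉ P := by simp [P]
  have hv0 : 0 < v := Nat.pos_of_ne_zero (ne_of_mem_of_not_mem hv hS0)
  have hPcard : #P ≤ 6 := by
    have hsub : P ⊆ S.erase v := fun w hw => mem_erase.mpr
      ⟨(Nat.mem_properDivisors.mp (mem_inter.mp hw).2).2.ne, (mem_inter.mp hw).1⟩
    have := card_le_card hsub
    rw [card_erase_of_mem hv] at this
    omega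
  have hP : IsGcdClosed P := hS.inter_properDivisors hS0 v
  have hvq : (0 : ℚ) < (v : ℚ)⁻¹ := by positivity
  rcases (show #(dvdMaximals P) = 0 ∨ #(dvdMaximals P) = 1 ∨ 2 ≤ #(dvdMaximals P) by omega)
    with hM0 | hM1 | hM2
  · have hPe : P = ∅ := eq_empty_of_forall_notMem fun w hw => by
      obtain ⟨d, hd, -⟩ := exists_mem_dvdMaximals_dvd hP0 hw
      rw [card_eq_zero.mp hM0] at hd
      exact notMem_empty d hd
    rw [hPe, sum_empty]
    exact hvq.ne'
  · obtain ⟨d, hM_eq⟩ := card_eq_one.mp hM1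
    have hdP : d ∈ P := dvdMaximals_subset P (by simp [hM_eq])
    rw [h.sum_eq_inv_of_forall_dvd hdP fun w hw => by
      obtain ⟨d', hd', hwd⟩ := exists_mem_dvdMaximals_dvd hP0 hw
      rw [hM_eq, mem_singleton] at hd'
      rwa [hd'] at hwd]
    have hdv := (Nat.mem_properDivisors.mp (mem_inter.mp hdP).2).2
    have hd0 : (0 : ℚ) < d := by exact_mod_cast Nat.pos_of_ne_zero (ne_of_mem_of_not_mem hdP hP0)
    exact (inv_strictAnti₀ hd0 (by exact_mod_cast hdv : (d : ℚ) < v)).ne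
  · exact (lt_of_le_of_lt (h.sum_nonpos_of_two_le_card_dvdMaximals hP0 hP hPcard hM2) hvq).ne'

lemma invGcdWeight_eq_of_subset {S T : Finset ℕ} (hS0 : 0 ∉ S) (hTS : T ⊆ S) {m : ℕ}
    (hm : m ∈ T) (hmT : ∀ w ∈ T, m ∣ w) (hSm : ∀ w ∈ S, w ∉ T → w ∣ m) {v : ℕ} (hv : v ∈ T)
    (hvm : v ≠ m) : invGcdWeight S v = invGcdWeight T v := by
  induction v using Nat.strong_induction_on with
  | _ v ih =>
  have hT0 : 0 ∉ T := fun h0 => hS0 (hTS h0)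
  have hm0 : 0 < m := Nat.pos_of_ne_zero (ne_of_mem_of_not_mem hm hT0)
  have hmv : m < v :=
    lt_of_le_of_ne (Nat.le_of_dvd (Nat.pos_of_ne_zero (ne_of_mem_of_not_mem hv hT0)) (hmT v hv))
      (Ne.symm hvm)
  have hmD : m ∈ T ∩ v.properDivisors := by
    simp only [mem_inter, Nat.mem_properDivisors]
    exact ⟨hm, hmT v hv, hmv⟩
  have hsplit : S ∩ v.properDivisors = {w ∈ S | w ∣ m} ∪ (T ∩ v.properDivisors).erase m := by
    ext w
    simp only [mem_inter, mem_union, mem_filter, mem_erase, Nat.mem_properDivisors]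
    constructor
    · rintro ⟨hwS, hwv, hwlt⟩
      by_cases hwT : w ∈ T
      · by_cases hwm : w = m
        · exact Or.inl ⟨hwS, hwm ▸ dvd_rfl⟩
        · exact Or.inr ⟨hwm, hwT, hwv, hwlt⟩
      · exact Or.inl ⟨hwS, hSm w hwS hwT⟩
    · rintro (⟨hwS, hwm⟩ | ⟨-, hwT, hwv, hwlt⟩)
      · exact ⟨hwS, hwm.trans (hmT v hv), lt_of_le_of_lt (Nat.le_of_dvd hm0 hwm) hmv⟩
      · exact ⟨hTS hwT, hwv, hwlt⟩
  have hdisj : Disjoint {w ∈ S | w ∣ m} ((T ∩ v.properDivisors).erase m) := by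
    refine disjoint_left.mpr fun w hw hw' => ?_
    obtain ⟨hwm, hwT, -⟩ := by simpa only [mem_erase, mem_inter] using hw'
    exact hwm (Nat.dvd_antisymm (mem_filter.mp hw).2 (hmT w hwT))
  have hTm : invGcdWeight T m = (m : ℚ)⁻¹ := by
    rw [← hasInvDivisorSums_invGcdWeight hT0 m hm, show {w ∈ T | w ∣ m} = {m} from
      eq_singleton_iff_unique_mem.mpr ⟨mem_filter.mpr ⟨hm, dvd_rfl⟩,
        fun w hw => Nat.dvd_antisymm (mem_filter.mp hw).2 (hmT w (mem_filter.mp hw).1)⟩,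
      sum_singleton]
  have hsum : ∑ w ∈ (T ∩ v.properDivisors).erase m, invGcdWeight S w
      = ∑ w ∈ (T ∩ v.properDivisors).erase m, invGcdWeight T w := by
    refine sum_congr rfl fun w hw => ?_
    obtain ⟨hwm, hwT, -, hwv⟩ := by
      simpa only [mem_erase, mem_inter, Nat.mem_properDivisors] using hw
    exact ih w hwv hwT hwm
  rw [invGcdWeight_eq, invGcdWeight_eq T, hsplit, sum_union hdisj,
    hasInvDivisorSums_invGcdWeight hS0 m (hTS hm), ← sum_erase_add _ _ hmD, hTm, hsum]
  ring

theorem invGcdWeight_ne_zero_of_isChain_sdiff {S R : Finset ℕ} (hS0 : 0 ∉ S)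
    (hR : IsChain (· ∣ ·) (R : Set ℕ)) (hW : IsGcdClosed (S \ R)) (hWne : (S \ R).Nonempty)
    (hRm : ∀ a ∈ R, a ∣ (S \ R).min' hWne) (hWcard : #(S \ R) ≤ 7) {v : ℕ} (hv : v ∈ S) :
    invGcdWeight S v ≠ 0 := by
  set W := S \ R
  set m := W.min' hWne
  have hW0 : 0 ∉ W := fun h => hS0 (mem_sdiff.mp h).1
  by_cases hvm : v ∣ m
  · -- the proper divisors of `v` lie below `m = min W`, hence in the chain `R`
    refine invGcdWeight_ne_zero_of_isChain hS0 hv (hR.mono (coe_subset.mpr fun w hw => ?_))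
    obtain ⟨hwS, -, hwv⟩ := by simpa only [mem_inter, Nat.mem_properDivisors] using hw
    by_contra hwR
    have := min'_le W w (mem_sdiff.mpr ⟨hwS, hwR⟩)
    have := Nat.le_of_dvd (Nat.pos_of_ne_zero (ne_of_mem_of_not_mem (min'_mem W hWne) hW0)) hvm
    omega
  · have hvW : v ∈ W := mem_sdiff.mpr ⟨hv, fun hvR => hvm (hRm v hvR)⟩
    rw [invGcdWeight_eq_of_subset hS0 sdiff_subset (min'_mem W hWne)
      (fun w hw => hW.min'_dvd hW0 hWne hw) (fun w hw hwW => hRm w (by simpa [W, hw] using hwW))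
      hvW fun h => hvm (h ▸ dvd_rfl)]
    exact invGcdWeight_ne_zero_of_card_le_seven hW0 hW hWcard hvW

def dvdMatrix (S : Finset ℕ) : Matrix S S ℚ := Matrix.of fun a c => if (c : ℕ) ∣ a then 1 else 0

lemma det_dvdMatrix {S : Finset ℕ} (hS0 : 0 ∉ S) : (dvdMatrix S).det = 1 := by
  rw [Matrix.det_of_isLowerTriangular]
  · simp [dvdMatrix]
  · intro a c hac
    have hac : (a : ℕ) < c := hac
    have ha0 : 0 < (a : ℕ) := Nat.pos_of_ne_zero (ne_of_mem_of_not_mem a.2 hS0)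
    simp only [dvdMatrix, Matrix.of_apply, ite_eq_right_iff, one_ne_zero, imp_false]
    exact fun hdvd => absurd (Nat.le_of_dvd ha0 hdvd) (not_le.mpr hac)

lemma invGcdMatrix_eq {S : Finset ℕ} (hS0 : 0 ∉ S) (hS : IsGcdClosed S) :
    Matrix.of (fun a b : S => ((Nat.gcd a b : ℕ) : ℚ)⁻¹)
      = dvdMatrix S * Matrix.diagonal (fun c : S => invGcdWeight S c)
        * (dvdMatrix S).transpose := by
  ext a b
  rw [Matrix.mul_apply, Matrix.of_apply,
    ← hasInvDivisorSums_invGcdWeight hS0 _ (hS a a.2 b b.2), sum_filter, ← sum_coe_sort S]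
  refine sum_congr rfl fun c _ => ?_
  simp only [dvdMatrix, Matrix.mul_diagonal, Matrix.transpose_apply, Matrix.of_apply,
    Nat.dvd_gcd_iff]
  by_cases hca : (c : ℕ) ∣ a <;> by_cases hcb : (c : ℕ) ∣ b <;> simp [hca, hcb]

lemma lcmMatrix_eq {S : Finset ℕ} (hS0 : 0 ∉ S) :
    Matrix.of (fun a b : S => (Nat.lcm a b : ℚ))
      = Matrix.diagonal (fun a : S => (a : ℚ))
        * Matrix.of (fun a b : S => ((Nat.gcd a b : ℕ) : ℚ)⁻¹)
        * Matrix.diagonal (fun a : S => (a : ℚ)) := by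
  ext a b
  rw [Matrix.mul_diagonal, Matrix.diagonal_mul, Matrix.of_apply, Matrix.of_apply]
  have hg : ((Nat.gcd a b : ℕ) : ℚ) ≠ 0 := by
    exact_mod_cast (Nat.gcd_pos_of_pos_left _
      (Nat.pos_of_ne_zero (ne_of_mem_of_not_mem a.2 hS0))).ne'
  field_simp
  rw [mul_comm]
  exact_mod_cast Nat.gcd_mul_lcm a b

lemma det_lcmMatrix {S : Finset ℕ} (hS0 : 0 ∉ S) (hS : IsGcdClosed S) :
    (Matrix.of fun a b : S => (Nat.lcm a b : ℚ)).det
      = (∏ a : S, (a : ℚ)) ^ 2 * ∏ a : S, invGcdWeight S a := by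
  rw [lcmMatrix_eq hS0, invGcdMatrix_eq hS0 hS]
  simp only [Matrix.det_mul, Matrix.det_diagonal, Matrix.det_transpose, det_dvdMatrix hS0]
  ring

theorem det_lcmMatrix_ne_zero {S : Finset ℕ} (hS0 : 0 ∉ S) (hS : IsGcdClosed S)
    (hweight : ∀ v ∈ S, invGcdWeight S v ≠ 0) :
    (Matrix.of fun a b : S => (Nat.lcm a b : ℚ)).det ≠ 0 := by
  rw [det_lcmMatrix hS0 hS]
  refine mul_ne_zero (pow_ne_zero _ (prod_ne_zero_iff.mpr fun a _ => ?_))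
    (prod_ne_zero_iff.mpr fun a _ => hweight a a.2)
  exact_mod_cast ne_of_mem_of_not_mem a.2 hS0

theorem stmt12_general (S : Finset ℕ) (h0 : 0 ∉ S)
    (n : ℕ) (hn : S.card = n)
    -- `S` is an `(n-7)`-fold GCD closed set:
    (R : Finset ℕ) (hRS : R ⊆ S) (hRcard : R.card = n - 7)
    (hRchain : IsChain (· ∣ ·) (↑R : Set ℕ))
    (hRne : R.Nonempty) (hSRne : (S \ R).Nonempty)
    (hmaxmin : R.max' hRne ∣ (S \ R).min' hSRne)
    (hSRgcd : ∀ a ∈ S \ R, ∀ b ∈ S \ R, Nat.gcd a b ∈ S \ R) :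
    (Matrix.of fun a b : {x // x ∈ S} => (Nat.lcm a.1 b.1 : ℚ)).det ≠ 0 := by
  have hRm : ∀ a ∈ R, a ∣ (S \ R).min' hSRne := fun a ha =>
    (hRchain.dvd_max' (fun h => h0 (hRS h)) hRne ha).trans hmaxmin
  have hS : IsGcdClosed S := by
    have hmW := fun w (hw : w ∈ S \ R) =>
      IsGcdClosed.min'_dvd hSRgcd (fun h => h0 (mem_sdiff.mp h).1) hSRne hw
    have := IsGcdClosed.union_of_isChain hRchain hSRgcd fun a ha w hw =>
      (hRm a ha).trans (hmW w hw)
    rwa [union_sdiff_of_subset hRS] at this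
  have hWcard : #(S \ R) ≤ 7 := by rw [card_sdiff_of_subset hRS]; omega
  exact det_lcmMatrix_ne_zero h0 hS fun v hv =>
    invGcdWeight_ne_zero_of_isChain_sdiff h0 hRchain hSRgcd hSRne hRm hWcard hv

theorem stmt12 (S : Finset ℕ) (h0 : 0 ∉ S)
    (n : ℕ) (hn : S.card = n) (hn8 : 8 ≤ n)
    -- `S` is an `(n-7)`-fold GCD closed set:
    (R : Finset ℕ) (hRS : R ⊆ S) (hRcard : R.card = n - 7)
    (hRchain : IsChain (· ∣ ·) (↑R : Set ℕ))
    (hRne : R.Nonempty) (hSRne : (S \ R).Nonempty)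
    (hmaxmin : R.max' hRne ∣ (S \ R).min' hSRne)
    (hSRgcd : ∀ a ∈ S \ R, ∀ b ∈ S \ R, Nat.gcd a b ∈ S \ R) :
    (Matrix.of fun a b : {x // x ∈ S} => (Nat.lcm a.1 b.1 : ℚ)).det ≠ 0 :=
  stmt12_general S h0 n hn R hRS hRcard hRchain hRne hSRne hmaxmin hSRgcd
end

section
/- If S is a finite GCD-closed set of positive integers such that the Hasse diagram of (S, |) is a tree (S is a ∧-tree set), then the LCM matrix [S] is invertible. -/
open scoped Classical

/-- The set of elements of `S` covered by `x` in the divisibility order on `S`. -/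
def CSdvd (S : Finset ℕ) (x : ℕ) : Set ℕ :=
  {y | y ∈ S ∧ x ∈ S ∧ y ∣ x ∧ y ≠ x ∧
    ∀ z ∈ S, y ∣ z → z ∣ x → z = y ∨ z = x}

/-- The set of proper divisors of `g` lying in `S`. -/
noncomputable def Tset (S : Finset ℕ) (g : ℕ) : Finset ℕ :=
  S.filter (fun d => d ∣ g ∧ d ≠ g)

lemma mem_Tset {S : Finset ℕ} {g d : ℕ} :
    d ∈ Tset S g ↔ d ∈ S ∧ d ∣ g ∧ d ≠ g := by
  simp [Tset]

/-- The coefficient attached to `g`. -/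
noncomputable def cc (S : Finset ℕ) (g : ℕ) : ℚ :=
  if h : (Tset S g).Nonempty then (g : ℚ)⁻¹ - (((Tset S g).max' h : ℕ) : ℚ)⁻¹
  else (g : ℚ)⁻¹

lemma max'_mem_Tset {S : Finset ℕ} {g : ℕ} (h : (Tset S g).Nonempty) :
    (Tset S g).max' h ∈ Tset S g := Finset.max'_mem _ _

/-- In a `∧`-tree set, every proper `S`-divisor of `g` divides the largest one. -/
lemma dvd_max' (S : Finset ℕ) (h0 : 0 ∉ S)
    (htree : ∀ x ∈ S, (CSdvd S x).Subsingleton)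
    {g : ℕ} (hgS : g ∈ S) (h : (Tset S g).Nonempty)
    {d : ℕ} (hd : d ∈ Tset S g) : d ∣ (Tset S g).max' h := by
  set y := (Tset S g).max' h with hy
  have hyT : y ∈ Tset S g := max'_mem_Tset h
  obtain ⟨hyS, hydvd, hyne⟩ := mem_Tset.mp hyT
  obtain ⟨hdS, hddvd, hdne⟩ := mem_Tset.mp hd
  -- the set of proper S-divisors of g that are multiples of d
  set W : Finset ℕ := (Tset S g).filter (fun z => d ∣ z) with hW
  have hWne : W.Nonempty := ⟨d, Finset.mem_filter.mpr ⟨hd, dvd_refl d⟩⟩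
  set w := W.max' hWne with hw
  have hwW : w ∈ W := Finset.max'_mem _ _
  obtain ⟨hwT, hdw⟩ := Finset.mem_filter.mp hwW
  obtain ⟨hwS, hwdvd, hwne⟩ := mem_Tset.mp hwT
  -- both y and w are covers of g in S
  have hyC : y ∈ CSdvd S g := by
    refine ⟨hyS, hgS, hydvd, hyne, fun z hzS hyz hzg => ?_⟩
    by_cases hzgeq : z = g
    · exact Or.inr hzgeq
    · left
      have hzT : z ∈ Tset S g := mem_Tset.mpr ⟨hzS, hzg, hzgeq⟩
      have h1 : z ≤ y := Finset.le_max' _ _ hzT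
      have hz0 : z ≠ 0 := fun hz => h0 (hz ▸ hzS)
      have h2 : y ≤ z := Nat.le_of_dvd (Nat.pos_of_ne_zero hz0) hyz
      omega
  have hwC : w ∈ CSdvd S g := by
    refine ⟨hwS, hgS, hwdvd, hwne, fun z hzS hwz hzg => ?_⟩
    by_cases hzgeq : z = g
    · exact Or.inr hzgeq
    · left
      have hzT : z ∈ Tset S g := mem_Tset.mpr ⟨hzS, hzg, hzgeq⟩
      have hzW : z ∈ W := Finset.mem_filter.mpr ⟨hzT, hdw.trans hwz⟩
      have h1 : z ≤ w := Finset.le_max' _ _ hzW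
      have hz0 : z ≠ 0 := fun hz => h0 (hz ▸ hzS)
      have h2 : w ≤ z := Nat.le_of_dvd (Nat.pos_of_ne_zero hz0) hwz
      omega
  have : w = y := htree g hgS hwC hyC
  exact this ▸ hdw

/-- Telescoping sum: the coefficients of the `S`-divisors of `g` sum to `1/g`. -/
lemma sum_cc (S : Finset ℕ) (h0 : 0 ∉ S)
    (htree : ∀ x ∈ S, (CSdvd S x).Subsingleton) :
    ∀ g, g ∈ S → ∑ z ∈ S.filter (· ∣ g), cc S z = (g : ℚ)⁻¹ := by
  intro g
  induction g using Nat.strong_induction_on with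
  | _ g ih =>
    intro hgS
    by_cases h : (Tset S g).Nonempty
    · set y := (Tset S g).max' h with hy
      have hyT : y ∈ Tset S g := max'_mem_Tset h
      obtain ⟨hyS, hydvd, hyne⟩ := mem_Tset.mp hyT
      have hg0 : g ≠ 0 := fun hgz => h0 (hgz ▸ hgS)
      have hy0 : y ≠ 0 := fun hyz => h0 (hyz ▸ hyS)
      have hylt : y < g := by
        have := Nat.le_of_dvd (Nat.pos_of_ne_zero hg0) hydvd
        omega
      have hsplit : S.filter (· ∣ g) = insert g (S.filter (· ∣ y)) := by
        ext z
        simp only [Finset.mem_filter, Finset.mem_insert]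
        constructor
        · rintro ⟨hzS, hzg⟩
          by_cases hzgeq : z = g
          · exact Or.inl hzgeq
          · exact Or.inr ⟨hzS, dvd_max' S h0 htree hgS h (mem_Tset.mpr ⟨hzS, hzg, hzgeq⟩)⟩
        · rintro (rfl | ⟨hzS, hzy⟩)
          · exact ⟨hgS, dvd_refl _⟩
          · exact ⟨hzS, hzy.trans hydvd⟩
      have hgnot : g ∉ S.filter (· ∣ y) := by
        simp only [Finset.mem_filter]
        rintro ⟨-, hgy⟩
        have := Nat.le_of_dvd (Nat.pos_of_ne_zero hy0) hgy
        omega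
      rw [hsplit, Finset.sum_insert hgnot, ih y hylt hyS]
      rw [cc, dif_pos h, ← hy]
      ring
    · have hone : S.filter (· ∣ g) = {g} := by
        ext z
        simp only [Finset.mem_filter, Finset.mem_singleton]
        constructor
        · rintro ⟨hzS, hzg⟩
          by_contra hne
          exact h ⟨z, mem_Tset.mpr ⟨hzS, hzg, hne⟩⟩
        · rintro rfl; exact ⟨hgS, dvd_refl _⟩
      rw [hone, Finset.sum_singleton, cc, dif_neg h]

lemma cc_ne_zero (S : Finset ℕ) (h0 : 0 ∉ S) {g : ℕ} (hgS : g ∈ S) :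
    cc S g ≠ 0 := by
  have hg0 : g ≠ 0 := fun hgz => h0 (hgz ▸ hgS)
  rw [cc]
  split_ifs with h
  · set y := (Tset S g).max' h with hy
    have hyT : y ∈ Tset S g := max'_mem_Tset h
    obtain ⟨hyS, hydvd, hyne⟩ := mem_Tset.mp hyT
    have hy0 : y ≠ 0 := fun hyz => h0 (hyz ▸ hyS)
    have hylt : y < g := by
      have := Nat.le_of_dvd (Nat.pos_of_ne_zero hg0) hydvd
      omega
    have hy' : (0:ℚ) < (y:ℚ) := by exact_mod_cast Nat.pos_of_ne_zero hy0
    have hg' : (y:ℚ) < (g:ℚ) := by exact_mod_cast hylt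
    have h1 : (g : ℚ)⁻¹ < (y : ℚ)⁻¹ := by
      exact inv_strictAnti₀ hy' hg'
    intro hc
    linarith
  · exact inv_ne_zero (by exact_mod_cast hg0)

theorem stmt13 (S : Finset ℕ) (h0 : 0 ∉ S)
    (hg : ∀ a ∈ S, ∀ b ∈ S, Nat.gcd a b ∈ S)
    -- `S` is a `∧`-tree set: every element covers at most one element in `(S, ∣)`
    (htree : ∀ x ∈ S, (CSdvd S x).Subsingleton) :
    (Matrix.of fun a b : {x // x ∈ S} => (Nat.lcm a.1 b.1 : ℚ)).det ≠ 0 := by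
  classical
  have hne0 : ∀ a : {x // x ∈ S}, (a.1 : ℚ) ≠ 0 := by
    rintro ⟨a, ha⟩ hc
    exact h0 (by simpa using (Nat.cast_injective hc : a = 0) ▸ ha)
  -- the incidence matrix and the diagonal coefficient matrix
  set A : Matrix {x // x ∈ S} {x // x ∈ S} ℚ := Matrix.of (fun a z : {x // x ∈ S} => if z.1 ∣ a.1 then (1 : ℚ) else 0) with hA
  set D : Matrix {x // x ∈ S} {x // x ∈ S} ℚ := Matrix.diagonal (fun z : {x // x ∈ S} => cc S z.1) with hD
  set N : Matrix {x // x ∈ S} {x // x ∈ S} ℚ := Matrix.of (fun a b : {x // x ∈ S} => ((Nat.gcd a.1 b.1 : ℕ) : ℚ)⁻¹) with hN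
  -- N = A * D * Aᵀ
  have hfact : N = A * D * A.transpose := by
    ext a b
    have hab : Nat.gcd a.1 b.1 ∈ S := hg a.1 a.2 b.1 b.2
    have key : ∑ z ∈ S.filter (· ∣ Nat.gcd a.1 b.1), cc S z
        = ((Nat.gcd a.1 b.1 : ℕ) : ℚ)⁻¹ := sum_cc S h0 htree _ hab
    have : (A * D * A.transpose) a b
        = ∑ z : {x // x ∈ S}, (if z.1 ∣ a.1 then (1:ℚ) else 0) * cc S z.1
            * (if z.1 ∣ b.1 then (1:ℚ) else 0) := by
      simp [Matrix.mul_apply, Matrix.diagonal, Finset.sum_comm, Matrix.transpose,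
        Finset.mul_sum, Finset.sum_mul, hA, hD]
    rw [hN, Matrix.of_apply, this, ← key]
    have hsub : ∑ z : {x // x ∈ S}, (if z.1 ∣ a.1 then (1:ℚ) else 0) * cc S z.1
        * (if z.1 ∣ b.1 then (1:ℚ) else 0)
        = ∑ z ∈ S, (if z ∣ a.1 then (1:ℚ) else 0) * cc S z
        * (if z ∣ b.1 then (1:ℚ) else 0) :=
      Finset.sum_coe_sort S (fun z => (if z ∣ a.1 then (1:ℚ) else 0) * cc S z
        * (if z ∣ b.1 then (1:ℚ) else 0))
    rw [hsub, Finset.sum_filter]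
    apply Finset.sum_congr rfl
    intro z hz
    by_cases hdvd : z ∣ Nat.gcd a.1 b.1
    · rw [if_pos hdvd, if_pos (hdvd.trans (Nat.gcd_dvd_left _ _)),
        if_pos (hdvd.trans (Nat.gcd_dvd_right _ _))]
      ring
    · rw [if_neg hdvd]
      have : ¬(z ∣ a.1) ∨ ¬(z ∣ b.1) := by
        by_contra hc
        push_neg at hc
        exact hdvd (Nat.dvd_gcd hc.1 hc.2)
      rcases this with hna | hnb
      · rw [if_neg hna]; ring
      · rw [if_neg hnb]; ring
  -- A is lower triangular with 1's on the diagonal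
  have hAtri : A.BlockTriangular OrderDual.toDual := by
    intro i j hij
    have hij' : i.1 < j.1 := by
      have : i < j := hij
      exact_mod_cast this
    rw [hA, Matrix.of_apply, if_neg]
    intro hdvd
    have hi0 : i.1 ≠ 0 := fun hc => h0 (hc ▸ i.2)
    have := Nat.le_of_dvd (Nat.pos_of_ne_zero hi0) hdvd
    omega
  have hAdet : A.det = 1 := by
    rw [Matrix.det_of_lowerTriangular A hAtri]
    apply Finset.prod_eq_one
    intro i _
    simp [hA]
  have hDdet : D.det ≠ 0 := by
    rw [hD, Matrix.det_diagonal]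
    apply Finset.prod_ne_zero_iff.mpr
    intro z _
    exact cc_ne_zero S h0 z.2
  have hNdet : N.det ≠ 0 := by
    rw [hfact, Matrix.det_mul, Matrix.det_mul, Matrix.det_transpose, hAdet]
    simpa using hDdet
  -- the LCM matrix is diag * N * diag
  have hlcm : (Matrix.of fun a b : {x // x ∈ S} => (Nat.lcm a.1 b.1 : ℚ))
      = Matrix.diagonal (fun a : {x // x ∈ S} => (a.1 : ℚ)) * N
        * Matrix.diagonal (fun a : {x // x ∈ S} => (a.1 : ℚ)) := by
    ext a b
    rw [Matrix.mul_diagonal, Matrix.diagonal_mul]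
    have hgcd0 : ((Nat.gcd a.1 b.1 : ℕ) : ℚ) ≠ 0 := by
      have : Nat.gcd a.1 b.1 ∈ S := hg a.1 a.2 b.1 b.2
      intro hc
      exact h0 (by simpa using (Nat.cast_injective hc : Nat.gcd a.1 b.1 = 0) ▸ this)
    have hmul : ((Nat.gcd a.1 b.1 : ℕ) : ℚ) * ((Nat.lcm a.1 b.1 : ℕ) : ℚ)
        = (a.1 : ℚ) * (b.1 : ℚ) := by
      rw [← Nat.cast_mul, Nat.gcd_mul_lcm, Nat.cast_mul]
    rw [Matrix.of_apply, hN, Matrix.of_apply]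
    field_simp
    linarith [hmul]
  rw [hlcm, Matrix.det_mul, Matrix.det_mul, Matrix.det_diagonal]
  refine mul_ne_zero (mul_ne_zero ?_ hNdet) ?_ <;>
    exact Finset.prod_ne_zero_iff.mpr fun a _ => hne0 a
end

section
/- Let S = {x_1,...,x_n} be a GCD-closed set of distinct positive integers with x_1 < ... < x_n such that the quotients x_2/x_1, x_3/x_1, ..., x_n/x_1 are pairwise relatively prime integers. Then the LCM matrix [S] is nonsingular. -/
/-!
Write `x i = x 0 * y i`. Then `y 0 = 1`, the `y i` are pairwise coprime and `y i > 1` for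
`i ≠ 0`, so `lcm (x i) (x j) = x 0 * (y i * y j + [i = j] (y i - y i ^ 2))`: the LCM matrix is
`x 0` times a rank-one matrix plus a diagonal whose `0`-th entry vanishes. Such a matrix factors
as a lower times an upper triangular matrix, and its determinant is
`x 0 ^ (n + 1) * ∏_{i ≠ 0} (y i - y i ^ 2) ≠ 0`.
-/

open Matrix

namespace Matrix

variable {R : Type*} [CommRing R] {n : ℕ}

theorem updateCol_one_mul_updateRow_diagonal (d u v : Fin (n + 1) → R) (hd : d 0 = 0) :
    updateCol 1 0 u * updateRow (diagonal d) 0 v = diagonal d + vecMulVec u v := by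
  ext i j
  rcases eq_or_ne i 0 with rfl | hi
  · rw [mul_apply, Fintype.sum_eq_single 0]
    · simp [hd, vecMulVec_apply, diagonal_apply]
    · intro k hk
      simp [hk, Ne.symm hk]
  · rw [mul_apply, Fintype.sum_eq_add 0 i hi.symm]
    · simp [hi, vecMulVec_apply, diagonal_apply, add_comm]
    · rintro k ⟨hk0, hki⟩
      simp [hk0, Ne.symm hki]

theorem det_updateCol_one_zero (u : Fin (n + 1) → R) : (updateCol 1 0 u).det = u 0 := by
  rw [det_of_isLowerTriangular, Fin.prod_univ_succ]
  · simp [Fin.succ_ne_zero]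
  · intro i j (hij : i < j)
    simp [((Fin.zero_le i).trans_lt hij).ne', hij.ne]

theorem det_updateRow_diagonal_zero (d v : Fin (n + 1) → R) :
    (updateRow (diagonal d) 0 v).det = v 0 * ∏ i : Fin n, d i.succ := by
  rw [det_of_isUpperTriangular, Fin.prod_univ_succ]
  · simp [Fin.succ_ne_zero]
  · intro i j (hij : j < i)
    simp [updateRow_apply, ((Fin.zero_le j).trans_lt hij).ne', hij.ne']

theorem det_diagonal_add_vecMulVec_of_apply_zero (d u v : Fin (n + 1) → R) (hd : d 0 = 0) :
    (diagonal d + vecMulVec u v).det = u 0 * v 0 * ∏ i : Fin n, d i.succ := by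
  rw [← updateCol_one_mul_updateRow_diagonal d u v hd, det_mul, det_updateCol_one_zero,
    det_updateRow_diagonal_zero, mul_assoc]

end Matrix

theorem Nat.lcm_matrix_eq_diagonal_add_vecMulVec {R : Type*} [CommRing R] {ι : Type*}
    [DecidableEq ι] (y : ι → ℕ) (hy : Pairwise fun i j => Nat.Coprime (y i) (y j)) :
    (of fun i j => ((y i).lcm (y j) : R)) =
      diagonal (fun i => (y i : R) - y i ^ 2) + vecMulVec (fun i => (y i : R)) (fun i => y i) := by
  ext i j
  rcases eq_or_ne i j with rfl | hij
  · simp [vecMulVec_apply, sq]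
  · simp [vecMulVec_apply, hij, (hy hij).lcm_eq_mul]

theorem Nat.det_lcm_matrix_of_pairwise_coprime {R : Type*} [CommRing R] {n : ℕ}
    (y : Fin (n + 1) → ℕ) (hy0 : y 0 = 1) (hy : Pairwise fun i j => Nat.Coprime (y i) (y j)) :
    (of fun i j => ((y i).lcm (y j) : R)).det = ∏ i : Fin n, ((y i.succ : R) - y i.succ ^ 2) := by
  rw [Nat.lcm_matrix_eq_diagonal_add_vecMulVec y hy,
    det_diagonal_add_vecMulVec_of_apply_zero _ _ _ (by simp [hy0])]
  simp [hy0]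

open scoped Classical

theorem stmt15_general {n : ℕ} (x : Fin (n + 1) → ℕ)
    (hpos : ∀ i, 0 < x i) (hmono : StrictMono x)
    (hdvd : ∀ i, x 0 ∣ x i)
    (hcop : ∀ i j : Fin (n + 1), i ≠ 0 → j ≠ 0 → i ≠ j →
      Nat.Coprime (x i / x 0) (x j / x 0)) :
    (Matrix.of fun i j => (Nat.lcm (x i) (x j) : ℚ)).det ≠ 0 := by
  choose y hy using hdvd
  have hquot (i) : x i / x 0 = y i := by rw [hy i, Nat.mul_div_cancel_left _ (hpos 0)]
  have hy0 : y 0 = 1 := (hquot 0).symm.trans (Nat.div_self (hpos 0))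
  have hy_cop : Pairwise fun i j => Nat.Coprime (y i) (y j) := by
    intro i j hij
    rcases eq_or_ne i 0 with rfl | hi
    · simp [hy0]
    rcases eq_or_ne j 0 with rfl | hj
    · simp [hy0]
    simpa only [hquot] using hcop i j hi hj hij
  have hy_gt (i : Fin n) : 1 < y i.succ := by
    have hlt := hmono (Fin.succ_pos i)
    rw [hy i.succ] at hlt
    exact (Nat.lt_mul_iff_one_lt_right (hpos 0)).1 hlt
  have hscale : (of fun i j => ((x i).lcm (x j) : ℚ)) =
      (x 0 : ℚ) • of fun i j => ((y i).lcm (y j) : ℚ) := by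
    ext i j
    simp [hy i, hy j, Nat.lcm_mul_left]
  rw [hscale, det_smul, Nat.det_lcm_matrix_of_pairwise_coprime y hy0 hy_cop]
  refine mul_ne_zero (pow_ne_zero _ (mod_cast (hpos 0).ne'))
    (Finset.prod_ne_zero_iff.2 fun i _ => ?_)
  have hgt : (1 : ℚ) < y i.succ := mod_cast hy_gt i
  nlinarith

theorem stmt15 {n : ℕ} (x : Fin (n + 1) → ℕ)
    (hpos : ∀ i, 0 < x i) (hmono : StrictMono x)
    (hgcd : ∀ i j, ∃ k, x k = Nat.gcd (x i) (x j))
    (hdvd : ∀ i, x 0 ∣ x i)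
    (hcop : ∀ i j : Fin (n + 1), i ≠ 0 → j ≠ 0 → i ≠ j →
      Nat.Coprime (x i / x 0) (x j / x 0)) :
    (Matrix.of fun i j => (Nat.lcm (x i) (x j) : ℚ)).det ≠ 0 :=
  stmt15_general x hpos hmono hdvd hcop
end

section
/- Let S be a finite GCD-closed set of positive integers in which every element generates a double-chain set. Then the LCM matrix [S] is nonsingular and its inertia is (i_+, i_-, 0), where i_- equals the number of elements x ∈ S that cover exactly one element in (S, |), and i_+ = |S| − i_-. -/
open scoped Classical

/-- The gcd-closure of `T`: all gcd's of nonempty finite subsets of `T`. -/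
def gcdcl (T : Set ℕ) : Set ℕ :=
  {y | ∃ F : Finset ℕ, F.Nonempty ∧ ↑F ⊆ T ∧ y = F.gcd id}

/-- `x` generates a double-chain set in `S` (with respect to divisibility). -/
def genDCdvd (S : Finset ℕ) (x : ℕ) : Prop :=
  ∃ A B : Set ℕ, Disjoint A B ∧ IsChain (· ∣ ·) A ∧ IsChain (· ∣ ·) B ∧
    gcdcl (CSdvd S x) \ CSdvd S x = A ∪ B

/-!
Let `β` be the Möbius inversion of `n ↦ 1/n` on `(S, ∣)`, so that `∑_{w ∈ S, w ∣ z} β w = 1/z`.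
As `S` is gcd-closed, `lcm x y = x y ∑_{w ∣ gcd x y} β w`, i.e. `[S] = P diag(β) Pᵀ` with `P` lower
triangular with diagonal `x`; by Sylvester's law of inertia `[S]` has as many negative (positive)
eigenvalues as `β` has negative (positive) values.

Inclusion–exclusion over the set `C` of elements covered by `x` gives
`β x = 1/x - ∑_{∅ ≠ T ⊆ C} (-1)^(|T|+1) / gcd T`. This is `1/x > 0` if `C = ∅` and `1/x - 1/y < 0`
if `C = {y}`. If `|C| ≥ 2` the alternating sum is negative: with `a` maximal in `meetcl(C) \ C` and
`y ∈ C` above `a` such that every proper divisor of `y` in `meetcl(C)` divides `a`, removing `y`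
from `C` changes the sum by `1/y - 1/a < 0`, and for `C = {y₀, y}` the sum is
`1/y₀ + 1/y - 1/a < 0`.
-/

open Finset Matrix QuadraticMap

noncomputable def altGcdSum (C : Finset ℕ) (h : ℕ → ℝ) : ℝ :=
  ∑ T ∈ C.powerset with T.Nonempty, (-1) ^ (#T + 1) * h (T.gcd id)

theorem altGcdSum_eq_sub_sum_powerset (C : Finset ℕ) (h : ℕ → ℝ) :
    altGcdSum C h = h 0 - ∑ T ∈ C.powerset, (-1) ^ #T * h (T.gcd id) := by
  rw [← sum_filter_add_sum_filter_not C.powerset Finset.Nonempty, altGcdSum]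
  have : {T ∈ C.powerset | ¬T.Nonempty} = {∅} := by
    ext T
    simp only [mem_filter, mem_powerset, not_nonempty_iff_eq_empty, mem_singleton]
    exact ⟨And.right, fun hT => ⟨hT ▸ empty_subset C, hT⟩⟩
  rw [this, sum_singleton, card_empty, gcd_empty]
  simp [pow_succ]

theorem altGcdSum_empty (h : ℕ → ℝ) : altGcdSum ∅ h = 0 := by
  simp [altGcdSum_eq_sub_sum_powerset]

theorem altGcdSum_insert {y : ℕ} {E : Finset ℕ} (hy : y ∉ E) (h : ℕ → ℝ) :
    altGcdSum (insert y E) h = altGcdSum E h + h y - altGcdSum E (fun n => h (Nat.gcd y n)) := by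
  have hins : ∀ T ∈ E.powerset, (-1 : ℝ) ^ #(insert y T) * h ((insert y T).gcd id)
      = -((-1) ^ #T * h (Nat.gcd y (T.gcd id))) := by
    intro T hT
    rw [card_insert_of_notMem (fun hyT => hy (mem_powerset.mp hT hyT)), gcd_insert]
    change (-1 : ℝ) ^ (#T + 1) * h (Nat.gcd y (T.gcd id)) = _
    ring
  simp only [altGcdSum_eq_sub_sum_powerset, sum_powerset_insert hy, sum_congr rfl hins,
    sum_neg_distrib, Nat.gcd_zero_right]
  ring

theorem altGcdSum_singleton (y : ℕ) (h : ℕ → ℝ) : altGcdSum {y} h = h y := by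
  rw [← insert_empty, altGcdSum_insert (notMem_empty y)]
  simp [altGcdSum_empty]

theorem altGcdSum_congr {C : Finset ℕ} {h h' : ℕ → ℝ}
    (hh : ∀ T ⊆ C, T.Nonempty → h (T.gcd id) = h' (T.gcd id)) :
    altGcdSum C h = altGcdSum C h' :=
  sum_congr rfl fun T hT => by
    rw [mem_filter, mem_powerset] at hT
    rw [hh T hT.1 hT.2]

theorem altGcdSum_eq_of_mem {C : Finset ℕ} {y : ℕ} (hy : y ∈ C) {h : ℕ → ℝ}
    (hinv : ∀ n, h (Nat.gcd y n) = h n) : altGcdSum C h = h y := by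
  rw [← insert_erase hy, altGcdSum_insert (notMem_erase y C), funext hinv]
  ring

theorem altGcdSum_insert_of_gcd_eq {y a y₀ : ℕ} {E : Finset ℕ} (hy : y ∉ E) (hy₀ : y₀ ∈ E)
    (ha : a ∣ y₀) (hgcd : ∀ T ⊆ E, T.Nonempty → Nat.gcd y (T.gcd id) = Nat.gcd (T.gcd id) a)
    (h : ℕ → ℝ) : altGcdSum (insert y E) h = altGcdSum E h + h y - h a := by
  rw [altGcdSum_insert hy,
    altGcdSum_congr (h := fun n => h (Nat.gcd y n)) (h' := fun n => h (Nat.gcd n a))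
      fun T hT hne => by rw [hgcd T hT hne],
    altGcdSum_eq_of_mem (h := fun n => h (Nat.gcd n a)) hy₀ fun n => by
      rw [Nat.gcd_assoc, Nat.gcd_eq_right ((Nat.gcd_dvd_right n a).trans ha)],
    Nat.gcd_eq_right ha]

theorem Finset.gcd_id_mem {S T : Finset ℕ} (hg : ∀ a ∈ S, ∀ b ∈ S, Nat.gcd a b ∈ S)
    (hT : T.Nonempty) (hTS : T ⊆ S) : T.gcd id ∈ S := by
  induction hT using Nonempty.cons_induction with
  | singleton a => simpa using hTS
  | cons a T ha hT ih =>
    rw [cons_eq_insert, insert_subset_iff] at hTS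
    rw [cons_eq_insert, gcd_insert]
    exact hg a hTS.1 _ (ih hTS.2)

theorem sum_biUnion_filter_dvd {S C : Finset ℕ} (hCS : C ⊆ S)
    (hg : ∀ a ∈ S, ∀ b ∈ S, Nat.gcd a b ∈ S) {β f : ℕ → ℝ}
    (hβ : ∀ z ∈ S, ∑ w ∈ S with w ∣ z, β w = f z) :
    ∑ w ∈ C.biUnion (fun y => {w ∈ S | w ∣ y}), β w = altGcdSum C f := by
  rw [inclusion_exclusion_sum_biUnion, altGcdSum]
  refine (Fintype.sum_congr _ _ fun T => ?_).trans (sum_coe_sort _ _)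
  have hT := mem_filter.mp T.2
  have hinf : T.1.inf' hT.2 (fun y => {w ∈ S | w ∣ y}) = {w ∈ S | w ∣ T.1.gcd id} := by
    ext w
    simp only [mem_inf', mem_filter, Finset.dvd_gcd_iff, id]
    obtain ⟨y, hy⟩ := hT.2
    exact ⟨fun h => ⟨(h y hy).1, fun i hi => (h i hi).2⟩, fun h i hi => ⟨h.1, h.2 i hi⟩⟩
  rw [hinf, hβ _ (gcd_id_mem hg hT.2 ((mem_powerset.mp hT.1).trans hCS)), zsmul_eq_mul]
  push_cast
  ring

noncomputable def moebiusInversion (S : Finset ℕ) (f : ℕ → ℝ) (z : ℕ) : ℝ :=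
  f z - ∑ w ∈ {w ∈ S | w ∣ z ∧ w < z}.attach, moebiusInversion S f w
termination_by z
decreasing_by exact (mem_filter.mp w.2).2.2

theorem moebiusInversion_eq (S : Finset ℕ) (f : ℕ → ℝ) (z : ℕ) :
    moebiusInversion S f z = f z - ∑ w ∈ S with w ∣ z ∧ w < z, moebiusInversion S f w := by
  rw [moebiusInversion, sum_attach]

theorem sum_moebiusInversion {S : Finset ℕ} (f : ℕ → ℝ) {z : ℕ} (hz : z ∈ S) (hz0 : z ≠ 0) :
    ∑ w ∈ S with w ∣ z, moebiusInversion S f w = f z := by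
  have hsplit : {w ∈ S | w ∣ z} = insert z {w ∈ S | w ∣ z ∧ w < z} := by
    ext w
    simp only [mem_filter, mem_insert]
    constructor
    · rintro ⟨hw, hwz⟩
      exact (eq_or_ne w z).imp_right fun hne =>
        ⟨hw, hwz, (Nat.le_of_dvd (Nat.pos_of_ne_zero hz0) hwz).lt_of_ne hne⟩
    · rintro (rfl | ⟨hw, hwz, -⟩)
      exacts [⟨hz, dvd_rfl⟩, ⟨hw, hwz⟩]
  rw [hsplit, sum_insert (by simp), moebiusInversion_eq]
  ring

theorem isAntichain_CSdvd (S : Finset ℕ) (x : ℕ) : IsAntichain (· ∣ ·) (CSdvd S x) := by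
  rintro y ⟨-, -, -, -, hy⟩ y' ⟨hy'S, -, hy'x, hy'ne, -⟩ hne hdvd
  exact (hy y' hy'S hdvd hy'x).elim (fun h => hne h.symm) hy'ne

theorem exists_mem_CSdvd_dvd {S : Finset ℕ} (h0 : 0 ∉ S) {x w : ℕ} (hx : x ∈ S) (hw : w ∈ S)
    (hwx : w ∣ x) (hlt : w < x) : ∃ y ∈ CSdvd S x, w ∣ y := by
  obtain ⟨y, hyZ, hymax⟩ := exists_max_image {z ∈ S | w ∣ z ∧ z ∣ x ∧ z < x} id
    ⟨w, mem_filter.mpr ⟨hw, dvd_rfl, hwx, hlt⟩⟩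
  obtain ⟨hyS, hwy, hyx, hylt⟩ := mem_filter.mp hyZ
  refine ⟨y, ⟨hyS, hx, hyx, hylt.ne, fun z hzS hyz hzx => ?_⟩, hwy⟩
  by_contra! hz
  have hpos : ∀ n ∈ S, 0 < n := fun n hn => Nat.pos_of_ne_zero (ne_of_mem_of_not_mem hn h0)
  have hzlt : z < x := (Nat.le_of_dvd (hpos x hx) hzx).lt_of_ne hz.2
  have hzy := hymax z (mem_filter.mpr ⟨hzS, hwy.trans hyz, hzx, hzlt⟩)
  exact hz.1 (le_antisymm hzy (Nat.le_of_dvd (hpos z hzS) hyz))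

noncomputable def coverFinset (S : Finset ℕ) (x : ℕ) : Finset ℕ := {y ∈ S | y ∈ CSdvd S x}

theorem coe_coverFinset (S : Finset ℕ) (x : ℕ) : (coverFinset S x : Set ℕ) = CSdvd S x := by
  ext y
  simp only [coverFinset, coe_filter, Set.mem_ofPred_eq, and_iff_right_iff_imp]
  exact fun hy => hy.1

theorem coverFinset_subset (S : Finset ℕ) (x : ℕ) : coverFinset S x ⊆ S := filter_subset _ S

theorem biUnion_coverFinset {S : Finset ℕ} (h0 : 0 ∉ S) {x : ℕ} (hx : x ∈ S) :
    (coverFinset S x).biUnion (fun y => {w ∈ S | w ∣ y}) = {w ∈ S | w ∣ x ∧ w < x} := by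
  have hpos : ∀ n ∈ S, 0 < n := fun n hn => Nat.pos_of_ne_zero (ne_of_mem_of_not_mem hn h0)
  ext w
  simp only [mem_biUnion, mem_filter, coverFinset]
  constructor
  · rintro ⟨y, ⟨hyS, -, -, hyx, hyne, -⟩, hwS, hwy⟩
    have hlt : y < x := (Nat.le_of_dvd (hpos x hx) hyx).lt_of_ne hyne
    exact ⟨hwS, hwy.trans hyx, (Nat.le_of_dvd (hpos y hyS) hwy).trans_lt hlt⟩
  · rintro ⟨hwS, hwx, hlt⟩
    obtain ⟨y, hy, hwy⟩ := exists_mem_CSdvd_dvd h0 hx hwS hwx hlt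
    exact ⟨y, ⟨hy.1, hy⟩, hwS, hwy⟩

theorem moebiusInversion_eq_sub_altGcdSum {S : Finset ℕ} (h0 : 0 ∉ S)
    (hg : ∀ a ∈ S, ∀ b ∈ S, Nat.gcd a b ∈ S) (f : ℕ → ℝ) {x : ℕ} (hx : x ∈ S) :
    moebiusInversion S f x = f x - altGcdSum (coverFinset S x) f := by
  rw [moebiusInversion_eq, ← biUnion_coverFinset h0 hx,
    sum_biUnion_filter_dvd (coverFinset_subset S x) hg fun z hz =>
      sum_moebiusInversion f hz (ne_of_mem_of_not_mem hz h0)]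

theorem gcd_mem_gcdcl {C : Set ℕ} {T : Finset ℕ} (hT : T.Nonempty) (hTC : ↑T ⊆ C) :
    T.gcd id ∈ gcdcl C :=
  ⟨T, hT, hTC, rfl⟩

theorem gcd_mem_gcdcl_of_mem {C : Set ℕ} {y₁ y₂ : ℕ} (h₁ : y₁ ∈ C) (h₂ : y₂ ∈ C) :
    Nat.gcd y₁ y₂ ∈ gcdcl C :=
  ⟨{y₁, y₂}, insert_nonempty _ _, by simp [Set.insert_subset_iff, h₁, h₂],
    by rw [gcd_insert, gcd_singleton, normalize_eq]; rfl⟩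

theorem gcdcl_finite (C : Finset ℕ) : (gcdcl ↑C).Finite := by
  refine (C.powerset.image (·.gcd id)).finite_toSet.subset ?_
  rintro _ ⟨T, -, hTC, rfl⟩
  exact mem_image_of_mem _ (mem_powerset.mpr (coe_subset.mp hTC))

theorem gcdcl_mono {C D : Set ℕ} (h : C ⊆ D) : gcdcl C ⊆ gcdcl D :=
  fun _ ⟨T, hT, hTC, hz⟩ => ⟨T, hT, hTC.trans h, hz⟩

theorem exists_mem_dvd_of_mem_gcdcl {C : Set ℕ} {z : ℕ} (hz : z ∈ gcdcl C) : ∃ y ∈ C, z ∣ y := by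
  obtain ⟨T, ⟨y, hy⟩, hTC, rfl⟩ := hz
  exact ⟨y, hTC hy, gcd_dvd hy⟩

theorem zero_notMem_gcdcl {C : Set ℕ} (h0 : 0 ∉ C) : 0 ∉ gcdcl C := by
  intro hz
  obtain ⟨y, hy, hdvd⟩ := exists_mem_dvd_of_mem_gcdcl hz
  exact h0 (Nat.eq_zero_of_zero_dvd hdvd ▸ hy)

theorem gcdcl_sdiff_subset {C D : Set ℕ} (hCD : C ⊆ D) (hD : IsAntichain (· ∣ ·) D) :
    gcdcl C \ C ⊆ gcdcl D \ D := by
  rintro z ⟨hz, hzC⟩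
  refine ⟨gcdcl_mono hCD hz, fun hzD => hzC ?_⟩
  obtain ⟨y, hy, hzy⟩ := exists_mem_dvd_of_mem_gcdcl hz
  rwa [hD.eq hzD (hCD hy) hzy]

theorem IsChain.notMem_of_incomparable {Q : Set ℕ} (hQ : IsChain (· ∣ ·) Q) {a w : ℕ}
    (ha : a ∈ Q) (hwa : ¬ w ∣ a) (haw : ¬ a ∣ w) : w ∉ Q := fun hw =>
  (hQ.total hw ha).elim hwa haw

theorem dvd_or_dvd_of_isChain {A B : Set ℕ} (hA : IsChain (· ∣ ·) A) (hB : IsChain (· ∣ ·) B)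
    {a w₁ w₂ y₁ y₂ : ℕ} (ha : a ∈ A ∪ B) (hw₁ : w₁ ∈ A ∪ B) (hw₂ : w₂ ∈ A ∪ B)
    (haw₁ : ¬ a ∣ w₁) (haw₂ : ¬ a ∣ w₂) (hwy₁ : w₁ ∣ y₁) (hwy₂ : w₂ ∣ y₂)
    (hgcd : Nat.gcd y₁ y₂ = a) : w₁ ∣ a ∨ w₂ ∣ a := by
  wlog haA : a ∈ A generalizing A B
  · exact this hB hA (by rwa [Set.union_comm]) (by rwa [Set.union_comm])
      (by rwa [Set.union_comm]) (ha.resolve_left haA)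
  by_contra! h
  have hw₁B := hw₁.resolve_left (hA.notMem_of_incomparable haA h.1 haw₁)
  have hw₂B := hw₂.resolve_left (hA.notMem_of_incomparable haA h.2 haw₂)
  rcases hB.total hw₁B hw₂B with h₁₂ | h₂₁
  · exact h.1 (hgcd ▸ Nat.dvd_gcd hwy₁ (h₁₂.trans hwy₂))
  · exact h.2 (hgcd ▸ Nat.dvd_gcd (h₂₁.trans hwy₁) hwy₂)

theorem gcd_notMem_of_isAntichain {C : Set ℕ} (hC : IsAntichain (· ∣ ·) C) {y₁ y₂ : ℕ}
    (hy₁ : y₁ ∈ C) (hy₂ : y₂ ∈ C) (hne : y₁ ≠ y₂) : Nat.gcd y₁ y₂ ∉ C := fun h =>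
  hne (hC.eq hy₁ hy₂ (hC.eq h hy₁ (Nat.gcd_dvd_left _ _) ▸ Nat.gcd_dvd_right _ _))

theorem exists_dvd_maximal_mem_gcdcl_sdiff {C : Finset ℕ} (h0 : 0 ∉ C)
    (hC : IsAntichain (· ∣ ·) (C : Set ℕ)) (hcard : 1 < #C) :
    ∃ a ∈ gcdcl ↑C \ ↑C, ∀ w ∈ gcdcl ↑C \ ↑C, a ∣ w → w = a := by
  obtain ⟨y₁, hy₁, y₂, hy₂, hne⟩ := one_lt_card.mp hcard
  have hD : (gcdcl ↑C \ ↑C).Nonempty :=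
    ⟨Nat.gcd y₁ y₂, gcd_mem_gcdcl_of_mem hy₁ hy₂, gcd_notMem_of_isAntichain hC hy₁ hy₂ hne⟩
  obtain ⟨a, ha, hmax⟩ := Set.exists_max_image _ id ((gcdcl_finite C).sdiff) hD
  refine ⟨a, ha, fun w hw haw => le_antisymm (hmax w hw) (Nat.le_of_dvd ?_ haw)⟩
  exact Nat.pos_of_ne_zero fun h => zero_notMem_gcdcl h0 (h ▸ hw.1)

theorem exists_ne_dvd_of_mem_gcdcl_sdiff {C : Finset ℕ} {a : ℕ} (ha : a ∈ gcdcl ↑C \ ↑C) :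
    ∃ z₁ ∈ C, ∃ z₂ ∈ C, z₁ ≠ z₂ ∧ a ∣ z₁ ∧ a ∣ z₂ := by
  obtain ⟨⟨T, hT, hTC, rfl⟩, haC⟩ := ha
  rcases hT.exists_eq_singleton_or_nontrivial with ⟨y, rfl⟩ | ⟨z₁, h₁, z₂, h₂, hne⟩
  · exact absurd (by simpa using hTC) haC
  · exact ⟨z₁, hTC h₁, z₂, hTC h₂, hne, gcd_dvd h₁, gcd_dvd h₂⟩

theorem forall_dvd_or_forall_dvd {C : Finset ℕ} (hC : IsAntichain (· ∣ ·) (C : Set ℕ))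
    {A B : Set ℕ} (hA : IsChain (· ∣ ·) A) (hB : IsChain (· ∣ ·) B)
    (hAB : gcdcl ↑C \ ↑C ⊆ A ∪ B) {a : ℕ} (ha : a ∈ gcdcl ↑C \ ↑C)
    (hmax : ∀ w ∈ gcdcl ↑C \ ↑C, a ∣ w → w = a) {z₁ z₂ : ℕ} (hz₁ : z₁ ∈ C) (hz₂ : z₂ ∈ C)
    (hne : z₁ ≠ z₂) (haz₁ : a ∣ z₁) (haz₂ : a ∣ z₂) :
    (∀ w ∈ gcdcl ↑C, w ∣ z₁ → w ≠ z₁ → w ∣ a) ∨ (∀ w ∈ gcdcl ↑C, w ∣ z₂ → w ≠ z₂ → w ∣ a) := by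
  have hgcd : Nat.gcd z₁ z₂ = a := hmax _
    ⟨gcd_mem_gcdcl_of_mem hz₁ hz₂, gcd_notMem_of_isAntichain hC hz₁ hz₂ hne⟩
    (Nat.dvd_gcd haz₁ haz₂)
  have hout : ∀ w ∈ gcdcl ↑C, ∀ z ∈ C, w ∣ z → w ≠ z → ¬ w ∣ a → w ∈ A ∪ B ∧ ¬ a ∣ w :=
    fun w hw z hz hwz hwz' hwa =>
      have hwD : w ∈ gcdcl ↑C \ ↑C := ⟨hw, fun hwC => hwz' (hC.eq hwC hz hwz)⟩
      ⟨hAB hwD, fun haw => hwa (hmax w hwD haw ▸ dvd_rfl)⟩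
  by_contra! h
  obtain ⟨⟨w₁, hw₁, hwz₁, hwne₁, hwa₁⟩, ⟨w₂, hw₂, hwz₂, hwne₂, hwa₂⟩⟩ := h
  obtain ⟨hw₁AB, haw₁⟩ := hout w₁ hw₁ z₁ hz₁ hwz₁ hwne₁ hwa₁
  obtain ⟨hw₂AB, haw₂⟩ := hout w₂ hw₂ z₂ hz₂ hwz₂ hwne₂ hwa₂
  exact (dvd_or_dvd_of_isChain hA hB (hAB ha) hw₁AB hw₂AB haw₁ haw₂ hwz₁ hwz₂ hgcd).elim hwa₁ hwa₂

theorem gcd_gcd_eq_of_forall_dvd {C : Finset ℕ} (hC : IsAntichain (· ∣ ·) (C : Set ℕ))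
    {a y : ℕ} (hy : y ∈ C) (hay : a ∣ y) (hdvd : ∀ w ∈ gcdcl ↑C, w ∣ y → w ≠ y → w ∣ a)
    {T : Finset ℕ} (hT : T ⊆ C.erase y) (hTne : T.Nonempty) :
    Nat.gcd y (T.gcd id) = Nat.gcd (T.gcd id) a := by
  obtain ⟨t, ht⟩ := hTne
  obtain ⟨hty, htC⟩ := mem_erase.mp (hT ht)
  have hmem : Nat.gcd y (T.gcd id) ∈ gcdcl ↑C := by
    have := gcd_mem_gcdcl (C := ↑C) (insert_nonempty y T)
      (by simpa [Set.insert_subset_iff, hy] using hT.trans (erase_subset y C))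
    rwa [gcd_insert] at this
  have hne : Nat.gcd y (T.gcd id) ≠ y := fun h =>
    hty (hC.eq hy htC (h ▸ (Nat.gcd_dvd_right _ _).trans (gcd_dvd ht))).symm
  have hda := hdvd _ hmem (Nat.gcd_dvd_left _ _) hne
  exact Nat.dvd_antisymm (Nat.dvd_gcd (Nat.gcd_dvd_right _ _) hda)
    (Nat.dvd_gcd ((Nat.gcd_dvd_right _ _).trans hay) (Nat.gcd_dvd_left _ _))

/-- `a` is a divisibility-maximal element of the gcd-closure of `C` outside `C`, and `y` is an
element above `a` whose proper divisors in the gcd-closure all divide `a`; the two chains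
guarantee that at most one element above `a` fails this. -/
theorem exists_descent {C : Finset ℕ} (h0 : 0 ∉ C) (hC : IsAntichain (· ∣ ·) (C : Set ℕ))
    {A B : Set ℕ} (hA : IsChain (· ∣ ·) A) (hB : IsChain (· ∣ ·) B)
    (hAB : gcdcl ↑C \ ↑C ⊆ A ∪ B) (hcard : 1 < #C) :
    ∃ y ∈ C, ∃ y₀ ∈ C, ∃ a, y₀ ≠ y ∧ a ∉ C ∧ a ∣ y ∧ a ∣ y₀ ∧
      ∀ T ⊆ C.erase y, T.Nonempty → Nat.gcd y (T.gcd id) = Nat.gcd (T.gcd id) a := by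
  obtain ⟨a, ha, hmax⟩ := exists_dvd_maximal_mem_gcdcl_sdiff h0 hC hcard
  obtain ⟨z₁, hz₁, z₂, hz₂, hne, haz₁, haz₂⟩ := exists_ne_dvd_of_mem_gcdcl_sdiff ha
  rcases forall_dvd_or_forall_dvd hC hA hB hAB ha hmax hz₁ hz₂ hne haz₁ haz₂ with h | h
  · exact ⟨z₁, hz₁, z₂, hz₂, a, hne.symm, ha.2, haz₁, haz₂,
      fun T hT => gcd_gcd_eq_of_forall_dvd hC hz₁ haz₁ h hT⟩
  · exact ⟨z₂, hz₂, z₁, hz₁, a, hne, ha.2, haz₂, haz₁,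
      fun T hT => gcd_gcd_eq_of_forall_dvd hC hz₂ haz₂ h hT⟩

theorem inv_lt_inv_of_dvd {m n : ℕ} (hn : n ≠ 0) (hmn : m ∣ n) (hne : m ≠ n) :
    (n : ℝ)⁻¹ < (m : ℝ)⁻¹ := by
  have hm : 0 < m := Nat.pos_of_dvd_of_pos hmn (Nat.pos_of_ne_zero hn)
  exact inv_strictAnti₀ (by exact_mod_cast hm)
    (by exact_mod_cast (Nat.le_of_dvd (Nat.pos_of_ne_zero hn) hmn).lt_of_ne hne)

theorem inv_add_inv_lt_inv_of_dvd {a u v : ℕ} (hu : u ≠ 0) (hv : v ≠ 0) (hau : a ∣ u)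
    (hav : a ∣ v) (hau' : a ≠ u) (hav' : a ≠ v) (huv : u ≠ v) :
    (u : ℝ)⁻¹ + (v : ℝ)⁻¹ < (a : ℝ)⁻¹ := by
  obtain ⟨k, rfl⟩ := hau
  obtain ⟨l, rfl⟩ := hav
  have ha : a ≠ 0 := left_ne_zero_of_mul hu
  have hk0 : k ≠ 0 := right_ne_zero_of_mul hu
  have hl0 : l ≠ 0 := right_ne_zero_of_mul hv
  have hk1 : k ≠ 1 := fun h => hau' (by rw [h, mul_one])
  have hl1 : l ≠ 1 := fun h => hav' (by rw [h, mul_one])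
  have hkl : k ≠ l := fun h => huv (h ▸ rfl)
  have hk : 2 ≤ k := by omega
  have hl : 2 ≤ l := by omega
  have hkl : 5 ≤ k + l := by omega
  have hk' : (2 : ℝ) ≤ k := by exact_mod_cast hk
  have hl' : (2 : ℝ) ≤ l := by exact_mod_cast hl
  have hkl' : (5 : ℝ) ≤ k + l := by exact_mod_cast hkl
  have hsum : (k : ℝ)⁻¹ + (l : ℝ)⁻¹ < 1 := by
    rw [inv_add_inv (by positivity) (by positivity), div_lt_one (by positivity)]
    nlinarith [mul_nonneg (sub_nonneg.2 hk') (sub_nonneg.2 hl')]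
  have ha' : (0 : ℝ) < (a : ℝ)⁻¹ := by positivity
  push_cast
  rw [mul_inv, mul_inv, ← mul_add]
  exact mul_lt_of_lt_one_right ha' hsum

theorem altGcdSum_inv_neg {A B : Set ℕ} (hA : IsChain (· ∣ ·) A) (hB : IsChain (· ∣ ·) B)
    {C : Finset ℕ} (h0 : 0 ∉ C) (hC : IsAntichain (· ∣ ·) (C : Set ℕ))
    (hAB : gcdcl ↑C \ ↑C ⊆ A ∪ B) (hcard : 1 < #C) :
    altGcdSum C (fun n => (n : ℝ)⁻¹) < 0 := by
  induction C using Finset.strongInduction with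
  | H C ih =>
  obtain ⟨y, hy, y₀, hy₀, a, hne, haC, hay, hay₀, hgcd⟩ := exists_descent h0 hC hA hB hAB hcard
  have hy₀E : y₀ ∈ C.erase y := mem_erase.mpr ⟨hne, hy₀⟩
  have hy0 : y ≠ 0 := ne_of_mem_of_not_mem hy h0
  have hya := inv_lt_inv_of_dvd hy0 hay (ne_of_mem_of_not_mem hy haC).symm
  rw [← insert_erase hy, altGcdSum_insert_of_gcd_eq (notMem_erase y C) hy₀E hay₀ hgcd]
  rcases eq_singleton_or_nontrivial hy₀E with hE | hE
  · rw [hE, altGcdSum_singleton]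
    have := inv_add_inv_lt_inv_of_dvd (ne_of_mem_of_not_mem hy₀ h0) hy0 hay₀ hay
      (ne_of_mem_of_not_mem hy₀ haC).symm (ne_of_mem_of_not_mem hy haC).symm hne
    linarith
  · have hE' := ih (C.erase y) (erase_ssubset hy) (fun h => h0 (mem_of_mem_erase h))
      (hC.subset (by simp)) ((gcdcl_sdiff_subset (by simp) hC).trans hAB)
      (one_lt_card_iff_nontrivial.mpr hE)
    linarith

theorem ncard_CSdvd (S : Finset ℕ) (x : ℕ) : (CSdvd S x).ncard = #(coverFinset S x) := by
  rw [← coe_coverFinset, Set.ncard_coe_finset]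

theorem moebiusInversion_inv_neg {S : Finset ℕ} (h0 : 0 ∉ S)
    (hg : ∀ a ∈ S, ∀ b ∈ S, Nat.gcd a b ∈ S) {x : ℕ} (hx : x ∈ S)
    (hcov : (CSdvd S x).ncard = 1) : moebiusInversion S (fun n => (n : ℝ)⁻¹) x < 0 := by
  obtain ⟨y, hy⟩ := card_eq_one.mp ((ncard_CSdvd S x).symm.trans hcov)
  have hyx : y ∈ CSdvd S x := coe_coverFinset S x ▸ (by simp [hy])
  rw [moebiusInversion_eq_sub_altGcdSum h0 hg _ hx, hy, altGcdSum_singleton, sub_neg]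
  exact inv_lt_inv_of_dvd (ne_of_mem_of_not_mem hx h0) hyx.2.2.1 hyx.2.2.2.1

theorem moebiusInversion_inv_pos {S : Finset ℕ} (h0 : 0 ∉ S)
    (hg : ∀ a ∈ S, ∀ b ∈ S, Nat.gcd a b ∈ S) {x : ℕ} (hx : x ∈ S) (hdc : genDCdvd S x)
    (hcov : (CSdvd S x).ncard ≠ 1) : 0 < moebiusInversion S (fun n => (n : ℝ)⁻¹) x := by
  have hx0 : (0 : ℝ) < (x : ℝ)⁻¹ := by
    have := Nat.pos_of_ne_zero (ne_of_mem_of_not_mem hx h0)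
    positivity
  rw [moebiusInversion_eq_sub_altGcdSum h0 hg _ hx, sub_pos]
  rw [ncard_CSdvd] at hcov
  rcases Nat.lt_or_gt_of_ne hcov with hlt | hgt
  · rwa [card_eq_zero.mp (Nat.lt_one_iff.mp hlt), altGcdSum_empty]
  · obtain ⟨A, B, -, hA, hB, hAB⟩ := hdc
    refine (altGcdSum_inv_neg hA hB (fun h => h0 (coverFinset_subset S x h)) ?_ ?_ hgt).trans hx0
    · exact coe_coverFinset S x ▸ isAntichain_CSdvd S x
    · rw [coe_coverFinset, hAB]

theorem weightedSumSquares_eq_dotProduct {ι R : Type*} [Fintype ι] [DecidableEq ι] [CommRing R]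
    (w v : ι → R) : weightedSumSquares R w v = v ⬝ᵥ (diagonal w *ᵥ v) := by
  simp [weightedSumSquares_apply, dotProduct, mulVec_diagonal, mul_left_comm]

theorem equivalent_weightedSumSquares_of_diagonal_eq {ι R : Type*} [Fintype ι] [DecidableEq ι]
    [CommRing R] {μ δ : ι → R} {Q : Matrix ι ι R} (hQ : IsUnit Q.det)
    (h : diagonal μ = Q * diagonal δ * Qᵀ) :
    (weightedSumSquares R μ).Equivalent (weightedSumSquares R δ) :=
  ⟨{ toLinearEquiv := Qᵀ.toLinearEquiv' (Qᵀ.invertibleOfIsUnitDet (by rwa [det_transpose]))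
     map_app' := fun u => by
       change weightedSumSquares R δ (Qᵀ *ᵥ u) = _
       rw [weightedSumSquares_eq_dotProduct, weightedSumSquares_eq_dotProduct, h,
         ← mulVec_mulVec, ← mulVec_mulVec, dotProduct_mulVec u Q, mulVec_transpose] }⟩

theorem card_filter_eq_ncard {ι : Type*} [Fintype ι] (p : ι → Prop) [DecidablePred p] :
    #{i | p i} = {i | p i}.ncard := by
  rw [← Set.ncard_coe_finset]; simp

theorem Matrix.IsHermitian.card_eigenvalues_eq_of_eq_mul_diagonal {ι : Type*} [Fintype ι]
    [DecidableEq ι] {A P : Matrix ι ι ℝ} (hA : A.IsHermitian) (hP : IsUnit P.det) {δ : ι → ℝ}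
    (h : A = P * diagonal δ * Pᵀ) :
    #{i | hA.eigenvalues i < 0} = #{i | δ i < 0} ∧
      #{i | 0 < hA.eigenvalues i} = #{i | 0 < δ i} := by
  obtain ⟨U, hU, hUA⟩ :
      ∃ U : Matrix ι ι ℝ, IsUnit U.det ∧ Uᵀ * A * U = diagonal hA.eigenvalues := by
    refine ⟨hA.eigenvectorUnitary, UnitaryGroup.det_isUnit _, ?_⟩
    have := hA.conjStarAlgAut_star_eigenvectorUnitary
    rwa [Unitary.conjStarAlgAut_apply, Unitary.coe_star, star_star, star_eq_conjTranspose,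
      conjTranspose_eq_transpose_of_trivial, RCLike.ofReal_real_eq_id, Function.id_comp] at this
  have hdiag : diagonal hA.eigenvalues = (Uᵀ * P) * diagonal δ * (Uᵀ * P)ᵀ := by
    rw [← hUA, h, transpose_mul, transpose_transpose]
    simp only [Matrix.mul_assoc]
  have e := equivalent_weightedSumSquares_of_diagonal_eq
    (by rw [det_mul, det_transpose]; exact hU.mul hP) hdiag
  simp only [card_filter_eq_ncard, ← QuadraticForm.sigNeg_weightedSumSquares,
    ← QuadraticForm.sigPos_weightedSumSquares]
  exact ⟨e.sigNeg_eq, e.sigPos_eq⟩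

noncomputable def divisorMatrix (S : Finset ℕ) : Matrix {x // x ∈ S} {x // x ∈ S} ℝ :=
  of fun i k => if k.1 ∣ i.1 then (i.1 : ℝ) else 0

theorem isUnit_det_divisorMatrix {S : Finset ℕ} (h0 : 0 ∉ S) : IsUnit (divisorMatrix S).det := by
  have hpos : ∀ i : {x // x ∈ S}, 0 < i.1 := fun i =>
    Nat.pos_of_ne_zero (ne_of_mem_of_not_mem i.2 h0)
  have hlower : (divisorMatrix S).IsLowerTriangular := fun i k (hik : i < k) =>
    if_neg fun hki => (Nat.le_of_dvd (hpos i) hki).not_gt hik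
  rw [det_of_isLowerTriangular _ hlower, isUnit_iff_ne_zero, prod_ne_zero_iff]
  intro i _
  simp [divisorMatrix, (hpos i).ne']

theorem lcm_matrix_eq_divisorMatrix_mul_diagonal {S : Finset ℕ} (h0 : 0 ∉ S)
    (hg : ∀ a ∈ S, ∀ b ∈ S, Nat.gcd a b ∈ S)
    {β : ℕ → ℝ} (hβ : ∀ z ∈ S, ∑ w ∈ S with w ∣ z, β w = (z : ℝ)⁻¹) :
    of (fun a b : {x // x ∈ S} => (Nat.lcm a.1 b.1 : ℝ))
      = divisorMatrix S * diagonal (fun i => β i.1) * (divisorMatrix S)ᵀ := by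
  ext i j
  have hterm : ∀ k : {x // x ∈ S}, divisorMatrix S i k * β k * divisorMatrix S j k
      = if k.1 ∣ Nat.gcd i.1 j.1 then (i.1 : ℝ) * j.1 * β k else 0 := by
    intro k
    simp only [divisorMatrix, of_apply, Nat.dvd_gcd_iff, ite_and]
    split_ifs <;> ring
  have hgcd : (Nat.gcd i.1 j.1 : ℝ) ≠ 0 := by
    exact_mod_cast ne_of_mem_of_not_mem (hg _ i.2 _ j.2) h0
  rw [mul_apply]
  simp only [mul_diagonal, transpose_apply, hterm, of_apply]
  rw [sum_coe_sort S (fun k => if k ∣ Nat.gcd i.1 j.1 then (i.1 : ℝ) * j.1 * β k else 0),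
    ← sum_filter, ← mul_sum, hβ _ (hg _ i.2 _ j.2), eq_mul_inv_iff_mul_eq₀ hgcd]
  exact_mod_cast (mul_comm _ _).trans (Nat.gcd_mul_lcm i.1 j.1)

theorem card_filter_univ_subtype (S : Finset ℕ) (p : ℕ → Prop) [DecidablePred p] :
    #{i : {x // x ∈ S} | p i.1} = #{x ∈ S | p x} := by
  rw [← card_map (Function.Embedding.subtype _)]
  congr 1
  ext x
  simp [and_comm]

theorem stmt16 (S : Finset ℕ) (h0 : 0 ∉ S)
    (hg : ∀ a ∈ S, ∀ b ∈ S, Nat.gcd a b ∈ S)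
    (hdc : ∀ x ∈ S, genDCdvd S x)
    (M : Matrix {x // x ∈ S} {x // x ∈ S} ℝ)
    (hMdef : M = Matrix.of fun a b => (Nat.lcm a.1 b.1 : ℝ))
    (hM : M.IsHermitian) :
    M.det ≠ 0 ∧
    (Finset.univ.filter fun i => hM.eigenvalues i < 0).card =
      (S.filter fun x => (CSdvd S x).ncard = 1).card ∧
    (Finset.univ.filter fun i => 0 < hM.eigenvalues i).card =
      S.card - (S.filter fun x => (CSdvd S x).ncard = 1).card := by
  set β := moebiusInversion S (fun n => (n : ℝ)⁻¹)
  have hfact : M = divisorMatrix S * diagonal (fun i => β i.1) * (divisorMatrix S)ᵀ :=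
    hMdef.trans (lcm_matrix_eq_divisorMatrix_mul_diagonal h0 hg fun z hz =>
      sum_moebiusInversion _ hz (ne_of_mem_of_not_mem hz h0))
  have hP := isUnit_det_divisorMatrix h0
  have hneg : ∀ x ∈ S, β x < 0 ↔ (CSdvd S x).ncard = 1 := fun x hx =>
    ⟨fun h => by_contra fun hne => (moebiusInversion_inv_pos h0 hg hx (hdc x hx) hne).not_gt h,
      moebiusInversion_inv_neg h0 hg hx⟩
  have hpos : ∀ x ∈ S, 0 < β x ↔ ¬(CSdvd S x).ncard = 1 := fun x hx =>
    ⟨fun h hne => (moebiusInversion_inv_neg h0 hg hx hne).not_gt h,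
      moebiusInversion_inv_pos h0 hg hx (hdc x hx)⟩
  have hβ0 : ∀ i : {x // x ∈ S}, β i.1 ≠ 0 := fun i h =>
    ((hpos i.1 i.2).mpr fun h1 => ((hneg i.1 i.2).mpr h1).ne h).ne' h
  obtain ⟨hcard_neg, hcard_pos⟩ := hM.card_eigenvalues_eq_of_eq_mul_diagonal hP hfact
  refine ⟨?_, ?_, ?_⟩
  · rw [hfact, det_mul, det_mul, det_transpose, det_diagonal]
    exact mul_ne_zero (mul_ne_zero hP.ne_zero (prod_ne_zero_iff.mpr fun i _ => hβ0 i)) hP.ne_zero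
  · rw [hcard_neg, card_filter_univ_subtype S (β · < 0), filter_congr hneg]
  · rw [hcard_pos, card_filter_univ_subtype S (0 < β ·), filter_congr hpos,
      ← card_filter_add_card_filter_not (s := S) (fun x => (CSdvd S x).ncard = 1)]
    omega
end

section
/- Let S be a GCD-closed set of n ≥ 3 distinct positive integers. Then the LCM matrix [S] has at least one positive eigenvalue, and its number of negative eigenvalues i_-([S]) satisfies 2 ≤ i_-([S]) ≤ n − 1. -/
/-!
Let `m` be the least element of `S`; gcd-closedness makes `m` divide every element, and `0 ∉ S`
makes it positive. The quadratic form of `[S]` is `m > 0` at the basis vector `e_m`, so `[S]` has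
a positive eigenvalue. Pick two further elements `a < b` and put `L = lcm a b`. On the plane
spanned by `u = e_m - e_a` and `w = a e_b - L e_a` the form has Gram matrix
`[[m - a, a (b - L)], [a (b - L), a (a b - L²)]]`, which is negative definite: with `g = gcd a b`,
`(a - m)(L² - a b) - a (L - b)² = L ((a - g)(b - g) + (g - m)(L - g)) > 0`. A form that is negative
definite on a `k`-dimensional subspace has at least `k` negative eigenvalues, since otherwise the
subspace meets the span of the eigenvectors with nonnegative eigenvalues.
-/

open Matrix Finset

theorem Finset.exists_ne_lt_of_two_lt_card {α : Type*} [LinearOrder α] {s : Finset α}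
    (hs : 2 < #s) (x : α) : ∃ a ∈ s, ∃ b ∈ s, a ≠ x ∧ b ≠ x ∧ a < b := by
  have hcard : 1 < #(s.erase x) := by have := pred_card_le_card_erase (s := s) (a := x); omega
  have hne : (s.erase x).Nonempty := card_pos.mp (by omega)
  obtain ⟨hax, has⟩ := mem_erase.mp ((s.erase x).min'_mem hne)
  obtain ⟨hbx, hbs⟩ := mem_erase.mp ((s.erase x).max'_mem hne)
  exact ⟨_, has, _, hbs, hax, hbx, min'_lt_max'_of_card _ hcard⟩

theorem Finset.card_filter_lt_add_card_filter_gt_le {ι α : Type*} [Fintype ι] [Preorder α]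
    [DecidableLT α] (f : ι → α) (c : α) :
    #{i | f i < c} + #{i | c < f i} ≤ Fintype.card ι := by
  classical
  rw [← card_union_of_disjoint (disjoint_filter.mpr fun _ _ => lt_asymm)]
  exact card_le_univ _

theorem Nat.min'_dvd_of_gcd_mem {S : Finset ℕ} (hS : S.Nonempty) (h0 : 0 ∉ S)
    (hg : ∀ a ∈ S, ∀ b ∈ S, Nat.gcd a b ∈ S) {x : ℕ} (hx : x ∈ S) : S.min' hS ∣ x := by
  set m := S.min' hS
  have hm : 0 < m := Nat.pos_of_ne_zero fun h => h0 (h ▸ S.min'_mem hS)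
  have hgcd : Nat.gcd m x = m :=
    le_antisymm (Nat.gcd_le_left x hm) (S.min'_le _ (hg m (S.min'_mem hS) x hx))
  exact hgcd ▸ Nat.gcd_dvd_right m x

theorem mul_sub_sq_lt_of_gcd_mul_lcm {m g a b L : ℝ} (hm : 0 ≤ m) (hmg : m ≤ g) (hga : g ≤ a)
    (hab : a < b) (hbL : b ≤ L) (hma : m < a) (hgL : g * L = a * b) :
    a * (L - b) ^ 2 < (a - m) * (L ^ 2 - a * b) := by
  have key : (a - m) * (L ^ 2 - a * b) - a * (L - b) ^ 2 =
      L * ((a - g) * (b - g) + (g - m) * (L - g)) := by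
    linear_combination (a + b - L - m) * hgL
  have hpos : 0 < (a - g) * (b - g) + (g - m) * (L - g) := by
    rcases hga.lt_or_eq with hga | rfl
    · nlinarith [mul_pos (sub_pos.mpr hga) (sub_pos.mpr (hga.trans hab))]
    · nlinarith [mul_pos (sub_pos.mpr hma) (sub_pos.mpr (hab.trans_le hbL))]
  nlinarith [mul_pos (by linarith : (0 : ℝ) < L) hpos]

theorem Nat.mul_lcm_sub_sq_lt {m a b : ℕ} (hma : m ∣ a) (hmb : m ∣ b) (hlt : m < a)
    (hab : a < b) :
    (a : ℝ) * (Nat.lcm a b - b) ^ 2 < (a - m) * ((Nat.lcm a b : ℝ) ^ 2 - a * b) := by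
  have ha : 0 < a := (Nat.zero_le m).trans_lt hlt
  refine mul_sub_sq_lt_of_gcd_mul_lcm (g := Nat.gcd a b) (Nat.cast_nonneg m) ?_ ?_
    (by exact_mod_cast hab) ?_ (by exact_mod_cast hlt) (by exact_mod_cast Nat.gcd_mul_lcm a b)
  · exact_mod_cast Nat.le_of_dvd (Nat.gcd_pos_of_pos_left b ha) (Nat.dvd_gcd hma hmb)
  · exact_mod_cast Nat.gcd_le_left b ha
  · exact_mod_cast Nat.le_of_dvd (Nat.lcm_pos ha (ha.trans hab)) (Nat.dvd_lcm_right a b)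

theorem neg_of_sq_lt_mul {p q r s t : ℝ} (hp : p < 0) (hr : r ^ 2 < p * q)
    (hst : s ≠ 0 ∨ t ≠ 0) : s ^ 2 * p + 2 * s * t * r + t ^ 2 * q < 0 := by
  have key : p * (s ^ 2 * p + 2 * s * t * r + t ^ 2 * q) =
      (p * s + r * t) ^ 2 + t ^ 2 * (p * q - r ^ 2) := by ring
  have hpos : 0 < (p * s + r * t) ^ 2 + t ^ 2 * (p * q - r ^ 2) := by
    rcases eq_or_ne t 0 with rfl | ht
    · have hs : s ≠ 0 := by simpa using hst
      simpa using sq_pos_of_ne_zero (mul_ne_zero hp.ne hs)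
    · nlinarith [sq_pos_of_ne_zero ht, sq_nonneg (p * s + r * t)]
  exact neg_of_mul_pos_right (key ▸ hpos) hp.le

namespace Matrix.IsHermitian

variable {ι : Type*} [Fintype ι] {M : Matrix ι ι ℝ}

theorem dotProduct_mulVec_comm (hM : M.IsHermitian) (u w : ι → ℝ) :
    w ⬝ᵥ M *ᵥ u = u ⬝ᵥ M *ᵥ w := by
  rw [dotProduct_mulVec, dotProduct_comm, ← mulVec_transpose, (isHermitian_iff_isSymm.mp hM).eq]

theorem dotProduct_mulVec_smul_add_smul (hM : M.IsHermitian) (u w : ι → ℝ) (s t : ℝ) :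
    (s • u + t • w) ⬝ᵥ M *ᵥ (s • u + t • w) =
      s ^ 2 * (u ⬝ᵥ M *ᵥ u) + 2 * s * t * (u ⬝ᵥ M *ᵥ w) + t ^ 2 * (w ⬝ᵥ M *ᵥ w) := by
  simp only [mulVec_add, mulVec_smul, dotProduct_add, add_dotProduct, dotProduct_smul,
    smul_dotProduct, smul_eq_mul, hM.dotProduct_mulVec_comm u w]
  ring

variable [DecidableEq ι]

theorem dotProduct_mulVec_eq_sum_eigenvalues (hM : M.IsHermitian) (x : ι → ℝ) :
    x ⬝ᵥ M *ᵥ x =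
      ∑ i, hM.eigenvalues i * ((star (hM.eigenvectorUnitary : Matrix ι ι ℝ) *ᵥ x) i) ^ 2 := by
  have hUt : (hM.eigenvectorUnitary : Matrix ι ι ℝ)ᵀ = star _ :=
    (conjTranspose_eq_transpose_of_trivial _).symm
  conv_lhs => rw [hM.spectral_theorem, Unitary.conjStarAlgAut_apply]
  rw [← mulVec_mulVec, ← mulVec_mulVec, dotProduct_mulVec, ← mulVec_transpose, hUt]
  simp [mulVec_diagonal, dotProduct, sq, mul_left_comm]

theorem one_le_card_filter_eigenvalues_pos (hM : M.IsHermitian) {x : ι → ℝ}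
    (hx : 0 < x ⬝ᵥ M *ᵥ x) : 1 ≤ #{i | 0 < hM.eigenvalues i} := by
  rw [one_le_card]
  by_contra! h
  simp only [filter_eq_empty_iff, not_lt] at h
  rw [hM.dotProduct_mulVec_eq_sum_eigenvalues] at hx
  exact hx.not_ge (sum_nonpos fun i _ =>
    mul_nonpos_of_nonpos_of_nonneg (h (mem_univ i)) (sq_nonneg _))

theorem card_le_card_filter_eigenvalues_neg (hM : M.IsHermitian) {κ : Type*} [Fintype κ]
    (v : κ → ι → ℝ)
    (hv : ∀ c : κ → ℝ, c ≠ 0 → (∑ j, c j • v j) ⬝ᵥ M *ᵥ (∑ j, c j • v j) < 0) :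
    Fintype.card κ ≤ #{i | hM.eigenvalues i < 0} := by
  set N : Finset ι := {i | hM.eigenvalues i < 0}
  set U : Matrix ι ι ℝ := (hM.eigenvectorUnitary : Matrix ι ι ℝ)
  by_contra! hlt
  let f : (κ → ℝ) →ₗ[ℝ] (N → ℝ) :=
    LinearMap.funLeft ℝ ℝ Subtype.val ∘ₗ (star U).mulVecLin ∘ₗ Fintype.linearCombination ℝ v
  obtain ⟨c, hc, hc0⟩ := Submodule.exists_mem_ne_zero_of_ne_bot
    (LinearMap.ker_ne_bot_of_finrank_lt (f := f) (by simpa using hlt))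
  have hcoord : ∀ i, hM.eigenvalues i < 0 → (star U *ᵥ ∑ j, c j • v j) i = 0 := fun i hi => by
    simpa [f, Fintype.linearCombination_apply, mulVec_sum, mulVec_smul] using
      congrFun (LinearMap.mem_ker.mp hc) ⟨i, mem_filter.mpr ⟨mem_univ i, hi⟩⟩
  refine (hv c hc0).not_ge ?_
  rw [hM.dotProduct_mulVec_eq_sum_eigenvalues]
  refine sum_nonneg fun i _ => ?_
  rcases lt_or_ge (hM.eigenvalues i) 0 with hi | hi
  · simp [U, hcoord i hi]
  · positivity

theorem two_le_card_filter_eigenvalues_neg (hM : M.IsHermitian) {u w : ι → ℝ}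
    (hu : u ⬝ᵥ M *ᵥ u < 0) (huw : (u ⬝ᵥ M *ᵥ w) ^ 2 < (u ⬝ᵥ M *ᵥ u) * (w ⬝ᵥ M *ᵥ w)) :
    2 ≤ #{i | hM.eigenvalues i < 0} := by
  refine (hM.card_le_card_filter_eigenvalues_neg ![u, w] fun c hc => ?_).trans_eq' (by simp)
  have hc' : c 0 ≠ 0 ∨ c 1 ≠ 0 := by
    by_contra! h
    exact hc (funext fun j => by fin_cases j <;> simp [h.1, h.2])
  simpa [Fin.sum_univ_two, hM.dotProduct_mulVec_smul_add_smul] using neg_of_sq_lt_mul hu huw hc'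

end Matrix.IsHermitian

def lcmMatrix (S : Finset ℕ) : Matrix S S ℝ := of fun a b => (Nat.lcm a.1 b.1 : ℝ)

section lcmMatrix

variable {S : Finset ℕ}

theorem single_dotProduct_lcmMatrix_mulVec_single (x y : S) (s t : ℝ) :
    Pi.single x s ⬝ᵥ lcmMatrix S *ᵥ Pi.single y t = s * t * Nat.lcm x y := by
  simp [lcmMatrix, mulVec, dotProduct, Pi.single_apply, mul_assoc, mul_comm]

theorem two_le_card_filter_eigenvalues_neg_lcmMatrix (hM : (lcmMatrix S).IsHermitian)
    {m a b : ℕ} (hm : m ∈ S) (ha : a ∈ S) (hb : b ∈ S) (hma : m ∣ a) (hmb : m ∣ b)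
    (hlt : m < a) (hab : a < b) :
    2 ≤ #{i | hM.eigenvalues i < 0} := by
  set L := Nat.lcm a b
  have hL : Nat.lcm b a = L := Nat.lcm_comm b a
  refine hM.two_le_card_filter_eigenvalues_neg
    (u := Pi.single ⟨m, hm⟩ 1 - Pi.single ⟨a, ha⟩ 1)
    (w := Pi.single ⟨b, hb⟩ (a : ℝ) - Pi.single ⟨a, ha⟩ (L : ℝ)) ?_ ?_ <;>
  simp only [mulVec_sub, sub_dotProduct, dotProduct_sub, single_dotProduct_lcmMatrix_mulVec_single,
    Nat.lcm_self, Nat.lcm_eq_right hma, Nat.lcm_eq_right hmb, Nat.lcm_eq_left hma, hL]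
  · have : (m : ℝ) < a := by exact_mod_cast hlt
    linarith
  · have hpos : (0 : ℝ) < a := by exact_mod_cast (Nat.zero_le m).trans_lt hlt
    nlinarith [mul_lt_mul_of_pos_left (Nat.mul_lcm_sub_sq_lt hma hmb hlt hab) hpos]

end lcmMatrix

open scoped Classical in
theorem stmt17 (S : Finset ℕ) (h0 : 0 ∉ S)
    (hg : ∀ a ∈ S, ∀ b ∈ S, Nat.gcd a b ∈ S)
    (hn : 3 ≤ S.card)
    (M : Matrix {x // x ∈ S} {x // x ∈ S} ℝ)
    (hMdef : M = Matrix.of fun a b => (Nat.lcm a.1 b.1 : ℝ))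
    (hM : M.IsHermitian) :
    1 ≤ (Finset.univ.filter fun i => 0 < hM.eigenvalues i).card ∧
    2 ≤ (Finset.univ.filter fun i => hM.eigenvalues i < 0).card ∧
    (Finset.univ.filter fun i => hM.eigenvalues i < 0).card ≤ S.card - 1 := by
  subst hMdef
  have hS : S.Nonempty := card_pos.mp (by omega)
  set m := S.min' hS
  have hm := S.min'_mem hS
  have hdvd := fun x (hx : x ∈ S) => Nat.min'_dvd_of_gcd_mem hS h0 hg hx
  obtain ⟨a, ha, b, hb, ham, -, hab⟩ := exists_ne_lt_of_two_lt_card (s := S) (by omega) m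
  have hm0 : (0 : ℝ) < m := by exact_mod_cast Nat.pos_of_ne_zero fun h => h0 (h ▸ hm)
  have hpos : 1 ≤ #{i | 0 < hM.eigenvalues i} :=
    hM.one_le_card_filter_eigenvalues_pos (x := Pi.single ⟨m, hm⟩ 1) <| by
      rw [show of _ = lcmMatrix S from rfl, single_dotProduct_lcmMatrix_mulVec_single]
      simpa using hm0
  have hneg : 2 ≤ #{i | hM.eigenvalues i < 0} :=
    two_le_card_filter_eigenvalues_neg_lcmMatrix hM hm ha hb (hdvd a ha) (hdvd b hb)
      ((S.min'_le a ha).lt_of_ne ham.symm) hab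
  have hcard := card_filter_lt_add_card_filter_gt_le hM.eigenvalues 0
  rw [Fintype.card_coe] at hcard
  exact ⟨hpos, hneg, by omega⟩
end
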